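/- arXiv:2604.12093 — 6 statements merged into one kernel-verified Lean document; each statement's English description precedes it below -/
import Mathlib

section
/- Assume: (i) hat_theta_n -> theta_0 in probability; (ii) sup_{theta in cl(Theta)} |Gamma_n(theta) - Gamma(theta)| -> 0 in probability; (iii) (1/n) * sup_{theta in cl(Theta)} |third-order derivative array of H_n(theta)| is bounded in probability. Then Integral_{hat_U_n intersect A_n} hat_Z_n(u) * ( pi(hat_theta_n + n^{-1/2} u) - pi(hat_theta_n) ) du -> 0 in probability as n -> infinity. -/
open MeasureTheory Filter Matrix

noncomputable section

/-- Convergence in probability of a sequence of real random variables to a constant. -/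
def TendstoInProb {Ω : Type*} [MeasurableSpace Ω] (P : Measure Ω)
    (X : ℕ → Ω → ℝ) (c : ℝ) : Prop :=
  ∀ ε > 0, Tendsto (fun n => P {ω | ε < |X n ω - c|}) atTop (nhds 0)

/-- Boundedness in probability (`O_p(1)`) of a sequence of real random variables. -/
def BoundedInProb {Ω : Type*} [MeasurableSpace Ω] (P : Measure Ω)
    (X : ℕ → Ω → ℝ) : Prop :=
  ∀ ε > 0, ∃ M > 0, Filter.limsup (fun n => P {ω | M < |X n ω|}) atTop ≤ ENNReal.ofReal ε

/-- The `i`-th standard basis vector of `R^q`. -/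
def stdBasis (q : ℕ) (i : Fin q) : EuclideanSpace ℝ (Fin q) := EuclideanSpace.single i 1

/-- The `(i,j)` entry of the Hessian of `f` at `θ`. -/
def hessEntry (q : ℕ) (f : EuclideanSpace ℝ (Fin q) → ℝ)
    (θ : EuclideanSpace ℝ (Fin q)) (i j : Fin q) : ℝ :=
  iteratedFDeriv ℝ 2 f θ ![stdBasis q i, stdBasis q j]

/-- Frobenius norm of a `q × q` array. -/
def frobNorm (q : ℕ) (A : Fin q → Fin q → ℝ) : ℝ :=
  Real.sqrt (∑ i, ∑ j, (A i j) ^ 2)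

/-- Frobenius norm of the array of third-order partial derivatives of `f` at `θ`. -/
def thirdFrob (q : ℕ) (f : EuclideanSpace ℝ (Fin q) → ℝ)
    (θ : EuclideanSpace ℝ (Fin q)) : ℝ :=
  Real.sqrt (∑ i, ∑ j, ∑ k,
    (iteratedFDeriv ℝ 3 f θ ![stdBasis q i, stdBasis q j, stdBasis q k]) ^ 2)

/-!
On the event where `θ̂ₙ` is within `r/2` of `θ₀` and `-(1/n) ∇²Hₙ` is uniformly within `c/8` of
`Γ` (an event whose probability tends to one by (i) and (ii)), continuity of `Γ` and the
coercivity `uᵀ Γ(θ₀) u ≥ c ‖u‖²` give `-(1/n) ∇²Hₙ ≥ (3/4) c` on the ball of radius `r` around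
`θ₀`. As `θ̂ₙ` maximises `Hₙ` on `cl Θ` and `n^{-1/2} ‖u‖ ≤ n^{-1/8}` on `Aₙ`, a second-order
Taylor expansion along the segment gives `Hₙ(θ̂ₙ + n^{-1/2} u) - Hₙ(θ̂ₙ) ≤ -(3/8) c ‖u‖²` on
`Ûₙ ∩ Aₙ`. The integral is then bounded by the Gaussian-weighted oscillation
`∫ exp(-(3/8) c ‖u‖²) |π(θ̂ₙ + n^{-1/2} u) - π(θ̂ₙ)| du`, which by dominated convergence is
jointly continuous in the scale and the base point and vanishes at scale `0`, hence is uniformly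
small over the compact ball of base points once `n` is large.
-/

open Set Topology

section Frobenius

variable {q : ℕ}

lemma dotProduct_mulVec_eq_sum_mul (A : Matrix (Fin q) (Fin q) ℝ) (x : Fin q → ℝ) :
    x ⬝ᵥ A *ᵥ x = ∑ p : Fin q × Fin q, (x p.1 * x p.2) * A p.1 p.2 := by
  simp only [dotProduct, mulVec, Finset.mul_sum, Fintype.sum_prod_type]
  exact Finset.sum_congr rfl fun i _ => Finset.sum_congr rfl fun j _ => by ring

lemma abs_dotProduct_mulVec_le_frobNorm (A : Matrix (Fin q) (Fin q) ℝ)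
    (x : EuclideanSpace ℝ (Fin q)) : |x ⬝ᵥ A *ᵥ x| ≤ frobNorm q A * ‖x‖ ^ 2 := by
  have hx : √(∑ p : Fin q × Fin q, (x p.1 * x p.2) ^ 2) = ‖x‖ ^ 2 := by
    rw [EuclideanSpace.norm_eq, Real.sq_sqrt (by positivity), Fintype.sum_prod_type]
    simp_rw [mul_pow, ← Finset.mul_sum, ← Finset.sum_mul, Real.norm_eq_abs, sq_abs]
    exact Real.sqrt_mul_self (by positivity)
  have hA : √(∑ p : Fin q × Fin q, A p.1 p.2 ^ 2) = frobNorm q A := by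
    simp only [frobNorm, Fintype.sum_prod_type]
  rw [dotProduct_mulVec_eq_sum_mul, abs_le, ← hx, ← hA, mul_comm]
  constructor
  · have := Real.sum_mul_le_sqrt_mul_sqrt Finset.univ (fun p : Fin q × Fin q => x p.1 * x p.2)
      (fun p => -A p.1 p.2)
    simp only [mul_neg, Finset.sum_neg_distrib, neg_sq] at this
    linarith
  · exact Real.sum_mul_le_sqrt_mul_sqrt _ _ _

lemma mul_sq_norm_le_dotProduct_mulVec_of_frobNorm_sub_le {A M : Matrix (Fin q) (Fin q) ℝ}
    {c η : ℝ} (hM : ∀ x : EuclideanSpace ℝ (Fin q), c * ‖x‖ ^ 2 ≤ x ⬝ᵥ M *ᵥ x)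
    (hAM : frobNorm q (A - M) ≤ η) (x : EuclideanSpace ℝ (Fin q)) :
    (c - η) * ‖x‖ ^ 2 ≤ x ⬝ᵥ A *ᵥ x := by
  have hsplit : x ⬝ᵥ A *ᵥ x = x ⬝ᵥ M *ᵥ x + x ⬝ᵥ (A - M) *ᵥ x := by
    rw [sub_mulVec, dotProduct_sub]; ring
  have hpert := (abs_le.mp (abs_dotProduct_mulVec_le_frobNorm (A - M) x)).1
  nlinarith [hM x, sq_nonneg ‖x‖]

lemma continuous_frobNorm : Continuous (frobNorm q) := by
  unfold frobNorm; fun_prop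

lemma exists_pos_forall_dist_le_frobNorm_sub_le {X : Type*} [PseudoMetricSpace X]
    {Γ : X → Matrix (Fin q) (Fin q) ℝ} (hΓ : Continuous Γ) (x₀ : X) {η : ℝ} (hη : 0 < η) :
    ∃ r > 0, ∀ x, dist x x₀ ≤ r → frobNorm q (Γ x - Γ x₀) ≤ η := by
  have hcont : ContinuousAt (fun x => frobNorm q (Γ x - Γ x₀)) x₀ :=
    (continuous_frobNorm.comp (hΓ.sub continuous_const)).continuousAt
  obtain ⟨ρ, hρ, hball⟩ := Metric.eventually_nhds_iff.1 (hcont.eventually_lt continuousAt_const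
    (by simpa [frobNorm] using hη))
  exact ⟨ρ / 2, by positivity, fun x hx => (hball (by linarith)).le⟩

end Frobenius

lemma Matrix.PosDef.exists_pos_mul_sq_norm_le {n : Type*} [Fintype n] {M : Matrix n n ℝ}
    (hM : M.PosDef) : ∃ c > 0, ∀ x : EuclideanSpace ℝ n, c * ‖x‖ ^ 2 ≤ x ⬝ᵥ M *ᵥ x := by
  set Q : EuclideanSpace ℝ n → ℝ := fun x => x ⬝ᵥ M *ᵥ x
  have hQ : Continuous Q := by fun_prop
  have hQpos : ∀ x ≠ 0, 0 < Q x := fun x hx =>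
    by simpa using hM.dotProduct_mulVec_pos (x := x.ofLp) (by simpa using hx)
  have hQsmul : ∀ (t : ℝ) x, Q (t • x) = t ^ 2 * Q x := fun t x => by
    simp only [Q, WithLp.ofLp_smul, mulVec_smul, dotProduct_smul, smul_dotProduct, smul_eq_mul]
    ring
  rcases isEmpty_or_nonempty n with hn | hn
  · exact ⟨1, one_pos, fun x => by simp [Subsingleton.elim x 0]⟩
  obtain ⟨w, hw, hwmin⟩ := (isCompact_sphere (0 : EuclideanSpace ℝ n) 1).exists_isMinOn
    (NormedSpace.sphere_nonempty.2 zero_le_one) hQ.continuousOn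
  refine ⟨Q w, hQpos w (ne_zero_of_mem_unit_sphere ⟨w, hw⟩), fun x => ?_⟩
  rcases eq_or_ne x 0 with rfl | hx
  · simp
  have hx' : 0 < ‖x‖ := norm_pos_iff.2 hx
  have hmin : Q w ≤ ‖x‖⁻¹ ^ 2 * Q x := by
    rw [← hQsmul]
    exact hwmin (show ‖x‖⁻¹ • x ∈ Metric.sphere 0 1 by simp [norm_smul, hx'.ne'])
  calc Q w * ‖x‖ ^ 2 ≤ ‖x‖⁻¹ ^ 2 * Q x * ‖x‖ ^ 2 := by gcongr
    _ = Q x := by field_simp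

section Hessian

variable {q : ℕ}

lemma iteratedFDeriv_two_apply_eq_dotProduct_hessEntry (f : EuclideanSpace ℝ (Fin q) → ℝ)
    (θ x : EuclideanSpace ℝ (Fin q)) :
    iteratedFDeriv ℝ 2 f θ ![x, x] = x ⬝ᵥ of (hessEntry q f θ) *ᵥ x := by
  simp only [dotProduct, mulVec, of_apply, hessEntry, iteratedFDeriv_two_apply]
  conv_lhs => rw [← (EuclideanSpace.basisFun (Fin q) ℝ).sum_repr x]
  simp only [EuclideanSpace.basisFun_repr, EuclideanSpace.basisFun_apply, map_sum, map_smul,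
    cons_val_zero, cons_val_one, _root_.sum_apply, _root_.smul_apply, smul_eq_mul, Finset.mul_sum,
    _root_.stdBasis]
  rw [Finset.sum_comm]
  exact Finset.sum_congr rfl fun i _ => Finset.sum_congr rfl fun j _ => by ring

lemma iteratedFDeriv_two_apply_smul (f : EuclideanSpace ℝ (Fin q) → ℝ)
    (y w : EuclideanSpace ℝ (Fin q)) (δ : ℝ) :
    iteratedFDeriv ℝ 2 f y ![δ • w, δ • w] = δ ^ 2 * iteratedFDeriv ℝ 2 f y ![w, w] := by
  simp only [iteratedFDeriv_two_apply_eq_dotProduct_hessEntry, WithLp.ofLp_smul, mulVec_smul,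
    dotProduct_smul, smul_dotProduct, smul_eq_mul]
  ring

lemma mul_iteratedFDeriv_two_le_of_frobNorm_le {f : EuclideanSpace ℝ (Fin q) → ℝ}
    {y : EuclideanSpace ℝ (Fin q)} {M N : Matrix (Fin q) (Fin q) ℝ} {a c η₁ η₂ : ℝ}
    (hM : ∀ w : EuclideanSpace ℝ (Fin q), c * ‖w‖ ^ 2 ≤ w ⬝ᵥ M *ᵥ w)
    (hNM : frobNorm q (N - M) ≤ η₁)
    (hHN : frobNorm q (fun i j => -a * hessEntry q f y i j - N i j) ≤ η₂)
    (w : EuclideanSpace ℝ (Fin q)) :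
    a * iteratedFDeriv ℝ 2 f y ![w, w] ≤ -((c - η₁ - η₂) * ‖w‖ ^ 2) := by
  have hN := mul_sq_norm_le_dotProduct_mulVec_of_frobNorm_sub_le hM hNM
  have := mul_sq_norm_le_dotProduct_mulVec_of_frobNorm_sub_le hN
    (A := (-a) • of (hessEntry q f y)) hHN w
  rw [smul_mulVec, dotProduct_smul, smul_eq_mul,
    ← iteratedFDeriv_two_apply_eq_dotProduct_hessEntry] at this
  linarith

lemma continuousOn_frobNorm_hessEntry_sub {f : EuclideanSpace ℝ (Fin q) → ℝ}
    {U : Set (EuclideanSpace ℝ (Fin q))} (hU : IsOpen U) (hf : ContDiffOn ℝ 2 f U)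
    {Γ : EuclideanSpace ℝ (Fin q) → Matrix (Fin q) (Fin q) ℝ} (hΓ : Continuous Γ) (a : ℝ) :
    ContinuousOn (fun θ => frobNorm q fun i j => a * hessEntry q f θ i j - Γ θ i j) U := by
  have hD2 : ContinuousOn (iteratedFDeriv ℝ 2 f) U :=
    (hf.continuousOn_iteratedFDerivWithin le_rfl hU.uniqueDiffOn).congr fun x hx =>
      (iteratedFDerivWithin_of_isOpen 2 hU hx).symm
  unfold hessEntry
  refine continuous_frobNorm.comp_continuousOn
    (continuousOn_pi.2 fun i => continuousOn_pi.2 fun j => ?_)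
  exact (continuousOn_const.mul ((continuous_eval_const _).comp_continuousOn hD2)).sub
    (hΓ.matrix_elem i j).continuousOn

end Hessian

lemma le_biSup_of_isCompact {X : Type*} [TopologicalSpace X] {s : Set X} {g : X → ℝ}
    (hs : IsCompact s) (hg : ContinuousOn g s) {x : X} (hx : x ∈ s) : g x ≤ ⨆ y ∈ s, g y :=
  le_ciSup₂ (f := fun y (_ : y ∈ s) => g y) ((hs.bddAbove_image hg).mono
    (iUnion_subset fun _ => range_subset_iff.2 fun hy => mem_image_of_mem g hy)) x hx

theorem IsMaxOn.sub_le_of_iteratedFDeriv_two_le {E : Type*} [NormedAddCommGroup E]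
    [NormedSpace ℝ E] {f : E → ℝ} {U : Set E} {x v : E} {κ : ℝ} (hU : IsOpen U)
    (hf : ContDiffOn ℝ 2 f U) (hseg : segment ℝ x (x + v) ⊆ U)
    (hmax : IsMaxOn f (segment ℝ x (x + v)) x)
    (hD2 : ∀ y ∈ segment ℝ x (x + v), iteratedFDeriv ℝ 2 f y ![v, v] ≤ -κ) :
    f (x + v) - f x ≤ -(κ / 2) := by
  set c : ℝ → E := fun t => x + t • v
  have hc : ∀ t ∈ Icc (0 : ℝ) 1, c t ∈ segment ℝ x (x + v) := fun t ht => by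
    rw [segment_eq_image']
    exact ⟨t, ht, by simp [c]⟩
  have hDf : ∀ y ∈ U, HasFDerivAt f (fderiv ℝ f y) y := fun y hy =>
    ((hf.differentiableOn two_ne_zero).differentiableAt (hU.mem_nhds hy)).hasFDerivAt
  have hD2f : ∀ y ∈ U, HasFDerivAt (fderiv ℝ f) (fderiv ℝ (fderiv ℝ f) y) y := fun y hy =>
    (((hf.fderiv_of_isOpen hU (by norm_num)).differentiableOn one_ne_zero).differentiableAt
      (hU.mem_nhds hy)).hasFDerivAt
  have hc' : ∀ t, HasDerivAt c v t := fun t => by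
    simpa only [id, one_smul] using ((hasDerivAt_id t).smul_const v).const_add x
  -- `h` is concave, and its slope at `0` is `≤ Df(x) v ≤ 0` by maximality; so `h 1 ≤ h 0`.
  set h : ℝ → ℝ := fun t => f (c t) + κ / 2 * t ^ 2
  set h' : ℝ → ℝ := fun t => fderiv ℝ f (c t) v + κ * t
  have hh : ∀ t ∈ Icc (0 : ℝ) 1, HasDerivAt h (h' t) t := fun t ht => by
    refine (((hDf _ (hseg (hc t ht))).comp_hasDerivAt t (hc' t)).add
      ((hasDerivAt_pow 2 t).const_mul (κ / 2))).congr_deriv ?_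
    simp only [h']
    ring
  have hh' : ∀ t ∈ Icc (0 : ℝ) 1,
      HasDerivAt h' (iteratedFDeriv ℝ 2 f (c t) ![v, v] + κ) t := fun t ht => by
    refine ((((ContinuousLinearMap.apply ℝ ℝ v).hasFDerivAt).comp_hasDerivAt t
      ((hD2f _ (hseg (hc t ht))).comp_hasDerivAt t (hc' t))).add
      ((hasDerivAt_id t).const_mul κ)).congr_deriv ?_
    simp [iteratedFDeriv_two_apply]
  have hconc : ConcaveOn ℝ (Icc 0 1) h := by
    refine concaveOn_of_hasDerivWithinAt2_nonpos (convex_Icc 0 1)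
      (fun t ht => (hh t ht).continuousAt.continuousWithinAt)
      (fun t ht => (hh t (interior_subset ht)).hasDerivWithinAt)
      (fun t ht => (hh' t (interior_subset ht)).hasDerivWithinAt) fun t ht => ?_
    linarith [hD2 _ (hc t (interior_subset ht))]
  have hslope := hconc.slope_le_of_hasDerivAt (left_mem_Icc.2 zero_le_one)
    (right_mem_Icc.2 zero_le_one) zero_lt_one (hh 0 (left_mem_Icc.2 zero_le_one))
  have hfirst : fderiv ℝ f x v ≤ 0 :=
    hmax.localize.hasFDerivWithinAt_nonpos (hDf x (hseg (left_mem_segment ℝ x _))).hasFDerivWithinAt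
      (mem_posTangentConeAt_of_segment_subset subset_rfl)
  have h01 : h 1 ≤ h 0 := by
    have := hslope.trans (le_of_eq_of_le (by simp [h', c]) hfirst)
    rwa [slope_def_field, sub_zero, div_one, sub_nonpos] at this
  simp only [h, c, one_smul, zero_smul, add_zero, one_pow, mul_one, ne_eq, OfNat.ofNat_ne_zero,
    not_false_eq_true, zero_pow, mul_zero] at h01
  linarith

section GaussianOscillation

variable {V : Type*} [NormedAddCommGroup V] [InnerProductSpace ℝ V] [FiniteDimensional ℝ V]
  [MeasurableSpace V] [BorelSpace V] {κ C : ℝ}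

lemma integrable_exp_neg_mul_sq_norm (hκ : 0 < κ) :
    Integrable (fun u : V => Real.exp (-κ * ‖u‖ ^ 2)) := by
  have h := (GaussianFourier.integrable_cexp_neg_mul_sq_norm_add (V := V) (b := κ)
    (by simpa using hκ) 0 0).norm
  refine h.congr (Eventually.of_forall fun u => ?_)
  simp only [zero_mul, add_zero, Complex.norm_exp]
  norm_cast

section

variable {F : Type*} [NormedAddCommGroup F]

def gaussianOscillation (κ : ℝ) (g : V → F) (δ : ℝ) (x : V) : ℝ :=
  ∫ u, Real.exp (-κ * ‖u‖ ^ 2) * ‖g (x + δ • u) - g x‖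

variable {g : V → F}

lemma integrable_gaussianOscillation_integrand (hκ : 0 < κ) (hg : Continuous g)
    (hC : ∀ x, ‖g x‖ ≤ C) (δ : ℝ) (x : V) :
    Integrable (fun u => Real.exp (-κ * ‖u‖ ^ 2) * ‖g (x + δ • u) - g x‖) := by
  refine ((integrable_exp_neg_mul_sq_norm hκ).mul_const (C + C)).mono'
    (by fun_prop) (Eventually.of_forall fun u => ?_)
  rw [norm_mul, Real.norm_eq_abs, Real.abs_exp, norm_norm]
  exact mul_le_mul_of_nonneg_left (norm_sub_le_of_le (hC _) (hC _)) (Real.exp_pos _).le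

lemma continuous_gaussianOscillation (hκ : 0 < κ) (hg : Continuous g) (hC : ∀ x, ‖g x‖ ≤ C) :
    Continuous (Function.uncurry (gaussianOscillation κ g)) := by
  refine continuous_of_dominated (bound := fun u => Real.exp (-κ * ‖u‖ ^ 2) * (C + C))
    (fun p => (integrable_gaussianOscillation_integrand hκ hg hC p.1 p.2).aestronglyMeasurable)
    (fun p => Eventually.of_forall fun u => ?_) ((integrable_exp_neg_mul_sq_norm hκ).mul_const _)
    (Eventually.of_forall fun u => by fun_prop)
  rw [norm_mul, Real.norm_eq_abs, Real.abs_exp, norm_norm]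
  exact mul_le_mul_of_nonneg_left (norm_sub_le_of_le (hC _) (hC _)) (Real.exp_pos _).le

lemma eventually_forall_gaussianOscillation_lt (hκ : 0 < κ) (hg : Continuous g)
    (hC : ∀ x, ‖g x‖ ≤ C) {K : Set V} (hK : IsCompact K) {ε : ℝ} (hε : 0 < ε) :
    ∀ᶠ δ in 𝓝 0, ∀ x ∈ K, gaussianOscillation κ g δ x < ε :=
  hK.eventually_forall_of_forall_eventually fun x _ =>
    (continuous_gaussianOscillation hκ hg hC).continuousAt.eventually_lt continuousAt_const
      (by simpa [gaussianOscillation] using hε)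

end

lemma abs_setIntegral_le_gaussianOscillation (hκ : 0 < κ) {g : V → ℝ} (hg : Continuous g)
    (hC : ∀ x, ‖g x‖ ≤ C) {S : Set V} (hS : MeasurableSet S) {φ : V → ℝ}
    (hφ : ∀ u ∈ S, φ u ≤ -κ * ‖u‖ ^ 2) (δ : ℝ) (x : V) :
    |∫ u in S, Real.exp (φ u) * (g (x + δ • u) - g x)| ≤ gaussianOscillation κ g δ x := by
  have hint := integrable_gaussianOscillation_integrand hκ hg hC δ x
  calc |∫ u in S, Real.exp (φ u) * (g (x + δ • u) - g x)|
      ≤ ∫ u in S, Real.exp (-κ * ‖u‖ ^ 2) * ‖g (x + δ • u) - g x‖ := by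
        rw [← Real.norm_eq_abs]
        refine norm_integral_le_of_norm_le hint.integrableOn
          ((ae_restrict_mem hS).mono fun u hu => ?_)
        rw [norm_mul, Real.norm_eq_abs, Real.abs_exp]
        exact mul_le_mul_of_nonneg_right (Real.exp_le_exp.2 (hφ u hu)) (norm_nonneg _)
    _ ≤ gaussianOscillation κ g δ x :=
        setIntegral_le_integral hint (Eventually.of_forall fun u => by positivity)

end GaussianOscillation

section LaplaceDecay

variable {q : ℕ} {Θ U : Set (EuclideanSpace ℝ (Fin q))} {f : EuclideanSpace ℝ (Fin q) → ℝ}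
  {Γ : EuclideanSpace ℝ (Fin q) → Matrix (Fin q) (Fin q) ℝ} {x θ₀ : EuclideanSpace ℝ (Fin q)}
  {a c r : ℝ}

lemma sub_le_neg_mul_sq_norm_of_frobNorm_le (hΘconv : Convex ℝ Θ)
    (hΘbdd : Bornology.IsBounded Θ) (hU : IsOpen U) (hΘU : closure Θ ⊆ U)
    (hf : ContDiffOn ℝ 2 f U) (hx : x ∈ closure Θ) (hmax : ∀ θ ∈ closure Θ, f θ ≤ f x)
    (hΓ : Continuous Γ) (hc : ∀ w : EuclideanSpace ℝ (Fin q), c * ‖w‖ ^ 2 ≤ w ⬝ᵥ Γ θ₀ *ᵥ w)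
    (hΓr : ∀ θ, dist θ θ₀ ≤ r → frobNorm q (Γ θ - Γ θ₀) ≤ c / 8)
    (hsup : ⨆ θ ∈ closure Θ, frobNorm q (fun i j => -a * hessEntry q f θ i j - Γ θ i j) ≤ c / 8)
    (hxθ₀ : ‖x - θ₀‖ ≤ r / 2) {δ : ℝ} (hδ : δ ^ 2 = a) {u : EuclideanSpace ℝ (Fin q)}
    (hu : x + δ • u ∈ closure Θ) (hδu : ‖δ • u‖ ≤ r / 2) :
    f (x + δ • u) - f x ≤ -(3 / 8 * c) * ‖u‖ ^ 2 := by
  have hseg : segment ℝ x (x + δ • u) ⊆ closure Θ := hΘconv.closure.segment_subset hx hu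
  have hD2 : ∀ y ∈ segment ℝ x (x + δ • u),
      iteratedFDeriv ℝ 2 f y ![δ • u, δ • u] ≤ -(3 / 4 * c * ‖u‖ ^ 2) := fun y hy => by
    have hyx : dist y x ≤ r / 2 :=
      (convex_closedBall x (r / 2)).segment_subset (Metric.mem_closedBall_self (by
        linarith [norm_nonneg (x - θ₀)])) (by simpa using hδu) hy
    have hyθ₀ : dist y θ₀ ≤ r := by
      linarith [dist_triangle y x θ₀, dist_eq_norm x θ₀]
    have hHy := (le_biSup_of_isCompact hΘbdd.isCompact_closure
      ((continuousOn_frobNorm_hessEntry_sub hU hf hΓ (-a)).mono hΘU) (hseg hy)).trans hsup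
    have := mul_iteratedFDeriv_two_le_of_frobNorm_le hc (hΓr y hyθ₀) hHy u
    rw [iteratedFDeriv_two_apply_smul, hδ]
    linarith
  have := IsMaxOn.sub_le_of_iteratedFDeriv_two_le hU hf (hseg.trans hΘU)
    (fun θ hθ => hmax θ (hseg hθ)) hD2
  linarith

lemma abs_setIntegral_exp_sub_mul_sub_le_gaussianOscillation (hΘopen : IsOpen Θ)
    (hΘconv : Convex ℝ Θ) (hΘbdd : Bornology.IsBounded Θ) (hU : IsOpen U) (hΘU : closure Θ ⊆ U)
    (hf : ContDiffOn ℝ 2 f U) (hx : x ∈ closure Θ) (hmax : ∀ θ ∈ closure Θ, f θ ≤ f x)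
    (hΓ : Continuous Γ) (hc₀ : 0 < c)
    (hc : ∀ w : EuclideanSpace ℝ (Fin q), c * ‖w‖ ^ 2 ≤ w ⬝ᵥ Γ θ₀ *ᵥ w)
    (hΓr : ∀ θ, dist θ θ₀ ≤ r → frobNorm q (Γ θ - Γ θ₀) ≤ c / 8)
    (hsup : ⨆ θ ∈ closure Θ, frobNorm q (fun i j => -a * hessEntry q f θ i j - Γ θ i j) ≤ c / 8)
    (hxθ₀ : ‖x - θ₀‖ ≤ r / 2) {δ R : ℝ} (hδ₀ : 0 ≤ δ) (hδ : δ ^ 2 = a) (hδR : δ * R ≤ r / 2)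
    {g : EuclideanSpace ℝ (Fin q) → ℝ} (hg : Continuous g) {C : ℝ} (hC : ∀ θ, ‖g θ‖ ≤ C) :
    |∫ u in {u | x + δ • u ∈ Θ} ∩ {u | ‖u‖ ≤ R},
        Real.exp (f (x + δ • u) - f x) * (g (x + δ • u) - g x)| ≤
      gaussianOscillation (3 / 8 * c) g δ x := by
  have hS : MeasurableSet ({u | x + δ • u ∈ Θ} ∩ {u | ‖u‖ ≤ R}) :=
    (hΘopen.preimage (by fun_prop)).measurableSet.inter
      (isClosed_le continuous_norm continuous_const).measurableSet
  refine abs_setIntegral_le_gaussianOscillation (by positivity) hg hC hS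
    (fun u ⟨huΘ, huR⟩ => ?_) δ x
  refine sub_le_neg_mul_sq_norm_of_frobNorm_le hΘconv hΘbdd hU hΘU hf hx hmax hΓ hc hΓr hsup hxθ₀
    hδ (subset_closure huΘ) ?_
  rw [norm_smul, Real.norm_of_nonneg hδ₀]
  exact (mul_le_mul_of_nonneg_left huR hδ₀).trans hδR

end LaplaceDecay


lemma tendsto_measure_of_eventually_subset_union {Ω ι : Type*} [MeasurableSpace Ω]
    {P : Measure Ω} {l : Filter ι} {A B C : ι → Set Ω}
    (hB : Tendsto (fun n => P (B n)) l (𝓝 0)) (hC : Tendsto (fun n => P (C n)) l (𝓝 0))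
    (hA : ∀ᶠ n in l, A n ⊆ B n ∪ C n) : Tendsto (fun n => P (A n)) l (𝓝 0) :=
  tendsto_of_tendsto_of_tendsto_of_le_of_le' tendsto_const_nhds (by simpa using hB.add hC)
    (Eventually.of_forall fun _ => zero_le)
    (hA.mono fun _ h => (measure_mono h).trans (measure_union_le _ _))

lemma tendsto_natCast_rpow_neg_atTop {p : ℝ} (hp : 0 < p) :
    Tendsto (fun n : ℕ => (n : ℝ) ^ (-p)) atTop (𝓝 0) :=
  (tendsto_rpow_neg_atTop hp).comp tendsto_natCast_atTop_atTop

theorem stmt1_general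
    {Ω : Type*} [MeasurableSpace Ω] (P : Measure Ω)
    (q : ℕ)
    (Θ : Set (EuclideanSpace ℝ (Fin q)))
    (hΘbdd : Bornology.IsBounded Θ) (hΘopen : IsOpen Θ)
    (hΘconv : Convex ℝ Θ)
    (H : ℕ → Ω → EuclideanSpace ℝ (Fin q) → ℝ)
    (hHsmooth : ∀ n ω, ∃ U : Set (EuclideanSpace ℝ (Fin q)),
      IsOpen U ∧ closure Θ ⊆ U ∧ ContDiffOn ℝ 3 (H n ω) U)
    (θhat : ℕ → Ω → EuclideanSpace ℝ (Fin q))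
    (hθhatmem : ∀ n ω, θhat n ω ∈ closure Θ)
    (hθhatmax : ∀ n ω, ∀ θ ∈ closure Θ, H n ω θ ≤ H n ω (θhat n ω))
    (θ0 : EuclideanSpace ℝ (Fin q))
    (Γ : EuclideanSpace ℝ (Fin q) → Matrix (Fin q) (Fin q) ℝ)
    (hΓcont : Continuous Γ)
    (hΓ0 : (Γ θ0).PosDef)
    (pri : EuclideanSpace ℝ (Fin q) → ℝ)
    (hpricont : Continuous pri) (hpribdd : ∃ C, ∀ θ, pri θ ≤ C)
    (hprinonneg : ∀ θ, 0 ≤ pri θ)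
    -- (i) θ̂ₙ → θ₀ in probability
    (h1 : ∀ ε > 0, Tendsto (fun n => P {ω | ε < ‖θhat n ω - θ0‖}) atTop (nhds 0))
    -- (ii) sup_{θ ∈ cl Θ} |Γₙ(θ) - Γ(θ)| → 0 in probability
    (h2 : ∀ ε > 0, Tendsto (fun n : ℕ =>
      P {ω | ε < ⨆ θ ∈ closure Θ, frobNorm q (fun i j =>
        (-(1 / (n : ℝ)) * hessEntry q (H n ω) θ i j) - Γ θ i j)})
      atTop (nhds 0)) :
    TendstoInProb P (fun n ω =>
      ∫ u in {u : EuclideanSpace ℝ (Fin q) |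
            θhat n ω + ((n : ℝ) ^ (-(1 : ℝ) / 2)) • u ∈ Θ} ∩
          {u : EuclideanSpace ℝ (Fin q) | ‖u‖ ≤ (n : ℝ) ^ ((3 : ℝ) / 8)},
        Real.exp (H n ω (θhat n ω + ((n : ℝ) ^ (-(1 : ℝ) / 2)) • u) - H n ω (θhat n ω)) *
          (pri (θhat n ω + ((n : ℝ) ^ (-(1 : ℝ) / 2)) • u) - pri (θhat n ω))) 0 := by
  intro ε hε
  obtain ⟨c, hc, hcoer⟩ := hΓ0.exists_pos_mul_sq_norm_le
  obtain ⟨r, hr, hΓr⟩ :=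
    exists_pos_forall_dist_le_frobNorm_sub_le hΓcont θ0 (by positivity : 0 < c / 8)
  obtain ⟨C, hC⟩ := hpribdd
  have hpriC : ∀ θ, ‖pri θ‖ ≤ C := fun θ => by
    rw [Real.norm_of_nonneg (hprinonneg θ)]; exact hC θ
  have hosc := (tendsto_natCast_rpow_neg_atTop one_half_pos).eventually
    (eventually_forall_gaussianOscillation_lt (by positivity : 0 < 3 / 8 * c) hpricont hpriC
      (isCompact_closedBall θ0 (r / 2)) hε)
  have hsmall := (tendsto_natCast_rpow_neg_atTop (by norm_num : (0 : ℝ) < 1 / 8)).eventually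
    (eventually_le_nhds (by positivity : (0 : ℝ) < r / 2))
  refine tendsto_measure_of_eventually_subset_union (h1 (r / 2) (by positivity))
    (h2 (c / 8) (by positivity)) ?_
  filter_upwards [hosc, hsmall, eventually_gt_atTop 0] with n hnosc hnsmall hn ω hω
  by_contra hgood
  simp only [mem_union, mem_ofPred_eq, not_or, not_lt] at hgood
  rw [mem_ofPred_eq, sub_zero] at hω
  have hn₀ : (0 : ℝ) < n := Nat.cast_pos.2 hn
  have hδsq : ((n : ℝ) ^ (-(1 : ℝ) / 2)) ^ 2 = 1 / (n : ℝ) := by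
    rw [← Real.rpow_natCast, ← Real.rpow_mul hn₀.le]
    norm_num [Real.rpow_neg_one]
  have hδA : (n : ℝ) ^ (-(1 : ℝ) / 2) * (n : ℝ) ^ ((3 : ℝ) / 8) ≤ r / 2 := by
    rwa [← Real.rpow_add hn₀, show -(1 : ℝ) / 2 + 3 / 8 = -(1 / 8) by norm_num]
  obtain ⟨U, hU, hΘU, hf⟩ := hHsmooth n ω
  refine hω.not_ge ((abs_setIntegral_exp_sub_mul_sub_le_gaussianOscillation hΘopen hΘconv hΘbdd
    hU hΘU (hf.of_le (by norm_num)) (hθhatmem n ω) (hθhatmax n ω) hΓcont hc hcoer hΓr hgood.2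
    hgood.1 (by positivity) hδsq hδA hpricont hpriC).trans ?_)
  rw [← neg_div] at hnosc
  exact (hnosc _ (by rw [Metric.mem_closedBall, dist_eq_norm]; exact hgood.1)).le

/-- Proposition 5.5: `∫_{Ûₙ ∩ Aₙ} Ẑₙ(u) (π(θ̂ₙ + n^{-1/2}u) - π(θ̂ₙ)) du → 0` in probability. -/
theorem stmt1
    {Ω : Type*} [MeasurableSpace Ω] (P : Measure Ω) [IsProbabilityMeasure P]
    (q : ℕ) (hq : 1 ≤ q)
    (Θ : Set (EuclideanSpace ℝ (Fin q)))
    (hΘne : Θ.Nonempty) (hΘbdd : Bornology.IsBounded Θ) (hΘopen : IsOpen Θ)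
    (hΘconv : Convex ℝ Θ)
    (H : ℕ → Ω → EuclideanSpace ℝ (Fin q) → ℝ)
    (hHmeas : ∀ n, Measurable (fun p : Ω × EuclideanSpace ℝ (Fin q) => H n p.1 p.2))
    (hHsmooth : ∀ n ω, ∃ U : Set (EuclideanSpace ℝ (Fin q)),
      IsOpen U ∧ closure Θ ⊆ U ∧ ContDiffOn ℝ 3 (H n ω) U)
    (θhat : ℕ → Ω → EuclideanSpace ℝ (Fin q))
    (hθhatmeas : ∀ n, Measurable (θhat n))
    (hθhatmem : ∀ n ω, θhat n ω ∈ closure Θ)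
    (hθhatmax : ∀ n ω, ∀ θ ∈ closure Θ, H n ω θ ≤ H n ω (θhat n ω))
    (θ0 : EuclideanSpace ℝ (Fin q)) (hθ0 : θ0 ∈ Θ)
    (Γ : EuclideanSpace ℝ (Fin q) → Matrix (Fin q) (Fin q) ℝ)
    (hΓcont : Continuous Γ) (hΓsymm : ∀ θ, (Γ θ).IsSymm)
    (hΓ0 : (Γ θ0).PosDef)
    (pri : EuclideanSpace ℝ (Fin q) → ℝ)
    (hpricont : Continuous pri) (hpribdd : ∃ C, ∀ θ, pri θ ≤ C)
    (hprinonneg : ∀ θ, 0 ≤ pri θ)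
    -- (i) θ̂ₙ → θ₀ in probability
    (h1 : ∀ ε > 0, Tendsto (fun n => P {ω | ε < ‖θhat n ω - θ0‖}) atTop (nhds 0))
    -- (ii) sup_{θ ∈ cl Θ} |Γₙ(θ) - Γ(θ)| → 0 in probability
    (h2 : ∀ ε > 0, Tendsto (fun n : ℕ =>
      P {ω | ε < ⨆ θ ∈ closure Θ, frobNorm q (fun i j =>
        (-(1 / (n : ℝ)) * hessEntry q (H n ω) θ i j) - Γ θ i j)})
      atTop (nhds 0))
    -- (iii) (1/n) sup_{θ ∈ cl Θ} |∂³ Hₙ(θ)| is bounded in probability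
    (h3 : BoundedInProb P (fun n ω => (1 / (n : ℝ)) * ⨆ θ ∈ closure Θ, thirdFrob q (H n ω) θ)) :
    TendstoInProb P (fun n ω =>
      ∫ u in {u : EuclideanSpace ℝ (Fin q) |
            θhat n ω + ((n : ℝ) ^ (-(1 : ℝ) / 2)) • u ∈ Θ} ∩
          {u : EuclideanSpace ℝ (Fin q) | ‖u‖ ≤ (n : ℝ) ^ ((3 : ℝ) / 8)},
        Real.exp (H n ω (θhat n ω + ((n : ℝ) ^ (-(1 : ℝ) / 2)) • u) - H n ω (θhat n ω)) *
          (pri (θhat n ω + ((n : ℝ) ^ (-(1 : ℝ) / 2)) • u) - pri (θhat n ω))) 0 :=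
  stmt1_general P q Θ hΘbdd hΘopen hΘconv H hHsmooth θhat hθhatmem hθhatmax θ0 Γ hΓcont hΓ0 pri
    hpricont hpribdd hprinonneg h1 h2
end
end

section
/- Let n >= 1 be an integer, lambda_0 > 0, and hat_theta in Theta with grad H(hat_theta) = 0. Let A be a real symmetric q x q matrix with v^T A v >= 4 lambda_0 |v|^2 for all v in R^q, and assume | -(1/n) Hess H(hat_theta) - A | <= lambda_0 (Frobenius norm) and n^{-1/8} * (1/n) * S <= 3 lambda_0. Then for every u in R^q with hat_theta + n^{-1/2} u in Theta and |u| <= n^{3/8}, it holds that H(hat_theta + n^{-1/2} u) - H(hat_theta) <= -lambda_0 |u|^2. -/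
/-!
Taylor's formula with integral remainder along the segment from `θ̂` to `θ̂ + h`, `h = n^{-1/2} u`,
gives `H(θ̂ + h) - H(θ̂) ≤ D²H(θ̂)[h, h] / 2 + S ‖h‖³ / 6`, the gradient term being zero.
By Cauchy–Schwarz on coordinates, `-D²H(θ̂)` is within `n λ₀` of `n A` as a quadratic form,
so `D²H(θ̂)[h, h] ≤ -3 λ₀ n ‖h‖² = -3 λ₀ ‖u‖²`; and since `‖u‖ ≤ n^{3/8}`,
`S ‖h‖³ ≤ n^{-1/8} (S / n) ‖u‖² ≤ 3 λ₀ ‖u‖²`. Hence the difference is at most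
`-3/2 λ₀ ‖u‖² + 1/2 λ₀ ‖u‖² = -λ₀ ‖u‖²`.
-/

open MeasureTheory Filter Matrix

noncomputable section

open scoped Nat

theorem Fintype.sum_fun_fin_succ {ι M : Type*} [Fintype ι] [AddCommMonoid M] {k : ℕ}
    (g : (Fin (k + 1) → ι) → M) :
    ∑ r, g r = ∑ i, ∑ r : Fin k → ι, g (Fin.cons i r) := by
  rw [← (Fin.consEquiv fun _ => ι).sum_comp, Fintype.sum_prod_type]
  rfl

theorem Fintype.sum_fun_fin_two {ι M : Type*} [Fintype ι] [AddCommMonoid M]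
    (g : (Fin 2 → ι) → M) : ∑ r, g r = ∑ i, ∑ j, g ![i, j] := by
  simp only [Fintype.sum_fun_fin_succ, Fintype.sum_unique]
  rfl

theorem Fintype.sum_fun_fin_three {ι M : Type*} [Fintype ι] [AddCommMonoid M]
    (g : (Fin 3 → ι) → M) : ∑ r, g r = ∑ i, ∑ j, ∑ k, g ![i, j, k] := by
  simp only [Fintype.sum_fun_fin_succ, Fintype.sum_unique]
  rfl

theorem EuclideanSpace.sum_smul_stdBasis {q : ℕ} (h : EuclideanSpace ℝ (Fin q)) :
    ∑ i, h i • stdBasis q i = h := by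
  simpa [_root_.stdBasis] using (EuclideanSpace.basisFun (Fin q) ℝ).sum_repr h

theorem ContinuousMultilinearMap.apply_const_eq_sum_stdBasis {q k : ℕ}
    (f : ContinuousMultilinearMap ℝ (fun _ : Fin k => EuclideanSpace ℝ (Fin q)) ℝ)
    (h : EuclideanSpace ℝ (Fin q)) :
    f (fun _ => h) = ∑ r : Fin k → Fin q, (∏ l, h (r l)) * f (fun l => stdBasis q (r l)) := by
  conv_lhs => rw [← EuclideanSpace.sum_smul_stdBasis h]
  rw [f.map_sum]
  simp only [f.map_smul_univ, smul_eq_mul]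

theorem abs_sum_prod_mul_le {q k : ℕ} (h : EuclideanSpace ℝ (Fin q)) (T : (Fin k → Fin q) → ℝ) :
    |∑ r, (∏ l, h (r l)) * T r| ≤ ‖h‖ ^ k * √(∑ r, T r ^ 2) := by
  have hweights : ∑ r : Fin k → Fin q, (∏ l, h (r l)) ^ 2 = (‖h‖ ^ k) ^ 2 := by
    rw [← pow_mul, mul_comm, pow_mul, EuclideanSpace.norm_sq_eq, ← Fin.prod_const,
      Fintype.prod_sum]
    simp only [Real.norm_eq_abs, sq_abs, Finset.prod_pow]
  calc |∑ r, (∏ l, h (r l)) * T r| ≤ ∑ r : Fin k → Fin q, |∏ l, h (r l)| * |T r| := by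
        simpa only [abs_mul] using
          Finset.abs_sum_le_sum_abs (fun r => (∏ l, h (r l)) * T r) Finset.univ
    _ ≤ √(∑ r : Fin k → Fin q, |∏ l, h (r l)| ^ 2) * √(∑ r, |T r| ^ 2) :=
        Real.sum_mul_le_sqrt_mul_sqrt _ _ _
    _ = ‖h‖ ^ k * √(∑ r, T r ^ 2) := by
        simp only [sq_abs, hweights, Real.sqrt_sq (by positivity : (0 : ℝ) ≤ ‖h‖ ^ k)]

theorem abs_quadForm_le_frobNorm {q : ℕ} (h : EuclideanSpace ℝ (Fin q)) (B : Fin q → Fin q → ℝ) :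
    |∑ i, ∑ j, h i * B i j * h j| ≤ ‖h‖ ^ 2 * frobNorm q B := by
  have := abs_sum_prod_mul_le h (fun r : Fin 2 → Fin q => B (r 0) (r 1))
  simp only [Fintype.sum_fun_fin_two, Fin.prod_univ_two, Matrix.cons_val_zero,
    Matrix.cons_val_one] at this
  simpa only [frobNorm, mul_right_comm] using this

theorem iteratedFDeriv_two_apply_const_eq_sum_hessEntry {q : ℕ}
    (f : EuclideanSpace ℝ (Fin q) → ℝ) (θ h : EuclideanSpace ℝ (Fin q)) :
    iteratedFDeriv ℝ 2 f θ (fun _ => h) = ∑ i, ∑ j, h i * hessEntry q f θ i j * h j := by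
  rw [ContinuousMultilinearMap.apply_const_eq_sum_stdBasis, Fintype.sum_fun_fin_two]
  refine Finset.sum_congr rfl fun i _ => Finset.sum_congr rfl fun j _ => ?_
  have hbasis : (fun l => stdBasis q (![i, j] l)) = ![stdBasis q i, stdBasis q j] := by
    ext1 l; fin_cases l <;> rfl
  rw [hbasis, Fin.prod_univ_two, hessEntry]
  simp only [Matrix.cons_val_zero, Matrix.cons_val_one]
  ring

theorem abs_iteratedFDeriv_three_apply_const_le_thirdFrob {q : ℕ}
    (f : EuclideanSpace ℝ (Fin q) → ℝ) (θ h : EuclideanSpace ℝ (Fin q)) :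
    |iteratedFDeriv ℝ 3 f θ (fun _ => h)| ≤ ‖h‖ ^ 3 * thirdFrob q f θ := by
  rw [ContinuousMultilinearMap.apply_const_eq_sum_stdBasis]
  refine (abs_sum_prod_mul_le h _).trans_eq ?_
  rw [Fintype.sum_fun_fin_three, thirdFrob]
  congr 2
  refine Finset.sum_congr rfl fun i _ => Finset.sum_congr rfl fun j _ =>
    Finset.sum_congr rfl fun k _ => ?_
  have hbasis : (fun l => stdBasis q (![i, j, k] l)) =
      ![stdBasis q i, stdBasis q j, stdBasis q k] := by
    ext1 l; fin_cases l <;> rfl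
  rw [hbasis]

theorem abs_sub_taylor_two_le {E : Type*} [NormedAddCommGroup E] [NormedSpace ℝ E]
    {f : E → ℝ} {x y : E} {M : ℝ}
    (hf : ∀ t ∈ Set.Icc (0 : ℝ) 1, ContDiffAt ℝ 3 f (x + t • y))
    (hM : ∀ t ∈ Set.Icc (0 : ℝ) 1, |iteratedFDeriv ℝ 3 f (x + t • y) (fun _ => y)| ≤ M) :
    |f (x + y) - (f x + fderiv ℝ f x y + iteratedFDeriv ℝ 2 f x (fun _ => y) / 2)| ≤ M / 6 := by
  have hremainder : |∫ t in (0 : ℝ)..1, (1 - t) ^ 2 • iteratedFDeriv ℝ 3 f (x + t • y) (fun _ => y)|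
      ≤ ∫ t in (0 : ℝ)..1, (1 - t) ^ 2 * M := by
    rw [← Real.norm_eq_abs]
    refine intervalIntegral.norm_integral_le_of_norm_le zero_le_one
      (Filter.Eventually.of_forall fun t ht => ?_)
      ((by fun_prop : Continuous fun t : ℝ => (1 - t) ^ 2 * M).intervalIntegrable
        (μ := volume) 0 1)
    rw [norm_smul, norm_pow, Real.norm_eq_abs, abs_of_nonneg (sub_nonneg.2 ht.2)]
    exact mul_le_mul_of_nonneg_left (hM t (Set.Ioc_subset_Icc_self ht)) (by positivity)
  have hweight : ∫ t in (0 : ℝ)..1, (1 - t) ^ 2 * M = M / 3 := by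
    rw [intervalIntegral.integral_mul_const,
      intervalIntegral.integral_comp_sub_left (fun t => t ^ 2)]
    norm_num
    ring
  have hsum : ∑ k ∈ Finset.range 3, (k ! : ℝ)⁻¹ • iteratedFDeriv ℝ k f x (fun _ => y)
      = f x + fderiv ℝ f x y + iteratedFDeriv ℝ 2 f x (fun _ => y) / 2 := by
    simp only [Finset.sum_range_succ, Finset.sum_range_zero, iteratedFDeriv_zero_apply,
      iteratedFDeriv_one_apply, smul_eq_mul]
    norm_num [Nat.factorial]
    ring
  rw [map_add_eq_sum_add_integral_iteratedFDeriv (n := 2) hf, hsum, add_sub_cancel_left,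
    smul_eq_mul, abs_mul]
  calc _ ≤ |((2 ! : ℕ) : ℝ)⁻¹| * (M / 3) := by gcongr; exact hremainder.trans_eq hweight
    _ = M / 6 := by norm_num; ring

theorem iteratedFDeriv_two_apply_const_le_of_frobNorm_le {q : ℕ}
    {f : EuclideanSpace ℝ (Fin q) → ℝ} {θ : EuclideanSpace ℝ (Fin q)} {A : Fin q → Fin q → ℝ}
    {c lam : ℝ} (hc : 0 < c)
    (hA : ∀ v : EuclideanSpace ℝ (Fin q), 4 * lam * ‖v‖ ^ 2 ≤ ∑ i, ∑ j, v i * A i j * v j)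
    (hHess : frobNorm q (fun i j => -(1 / c) * hessEntry q f θ i j - A i j) ≤ lam)
    (h : EuclideanSpace ℝ (Fin q)) :
    iteratedFDeriv ℝ 2 f θ (fun _ => h) ≤ -(3 * lam * (c * ‖h‖ ^ 2)) := by
  set B := fun i j => -(1 / c) * hessEntry q f θ i j - A i j
  have hsplit : iteratedFDeriv ℝ 2 f θ (fun _ => h) =
      -c * (∑ i, ∑ j, h i * A i j * h j + ∑ i, ∑ j, h i * B i j * h j) := by
    rw [iteratedFDeriv_two_apply_const_eq_sum_hessEntry, ← Finset.sum_add_distrib, Finset.mul_sum]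
    refine Finset.sum_congr rfl fun i _ => ?_
    rw [← Finset.sum_add_distrib, Finset.mul_sum]
    refine Finset.sum_congr rfl fun j _ => ?_
    simp only [B]
    field_simp
    ring
  have hB : -(‖h‖ ^ 2 * lam) ≤ ∑ i, ∑ j, h i * B i j * h j :=
    (abs_le.1 ((abs_quadForm_le_frobNorm h B).trans
      (mul_le_mul_of_nonneg_left hHess (by positivity)))).1
  have hsum : 3 * lam * ‖h‖ ^ 2 ≤ ∑ i, ∑ j, h i * A i j * h j + ∑ i, ∑ j, h i * B i j * h j := by
    linarith [hA h]
  rw [hsplit]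
  nlinarith [mul_le_mul_of_nonneg_left hsum hc.le]

section Scaling

variable {E : Type*} [NormedAddCommGroup E] [NormedSpace ℝ E] {c : ℝ} {u : E}

theorem mul_norm_rpow_neg_half_smul_sq (hc : 0 < c) :
    c * ‖c ^ (-(1 : ℝ) / 2) • u‖ ^ 2 = ‖u‖ ^ 2 := by
  have hsq : (c ^ (-(1 : ℝ) / 2)) ^ 2 = c⁻¹ := by
    rw [← Real.rpow_natCast, ← Real.rpow_mul hc.le]
    norm_num [Real.rpow_neg_one]
  rw [norm_smul, mul_pow, Real.norm_eq_abs, sq_abs, hsq, ← mul_assoc, mul_inv_cancel₀ hc.ne',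
    one_mul]

theorem norm_rpow_neg_half_smul_pow_three_mul_le {S lam : ℝ} (hc : 0 < c) (hS : 0 ≤ S)
    (hu : ‖u‖ ≤ c ^ ((3 : ℝ) / 8)) (hthird : c ^ (-(1 : ℝ) / 8) * (1 / c) * S ≤ 3 * lam) :
    ‖c ^ (-(1 : ℝ) / 2) • u‖ ^ 3 * S ≤ 3 * lam * ‖u‖ ^ 2 := by
  have hcube : (c ^ (-(1 : ℝ) / 2)) ^ 3 = c ^ (-(1 : ℝ) / 8) * (1 / c) * c ^ (-(3 : ℝ) / 8) := by
    rw [← Real.rpow_natCast, ← Real.rpow_mul hc.le, one_div, ← Real.rpow_neg_one,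
      ← Real.rpow_add hc, ← Real.rpow_add hc]
    norm_num
  have hsmall : c ^ (-(3 : ℝ) / 8) * ‖u‖ ≤ 1 := by
    rw [neg_div, Real.rpow_neg hc.le]
    exact inv_mul_le_one_of_le₀ hu (by positivity)
  calc ‖c ^ (-(1 : ℝ) / 2) • u‖ ^ 3 * S
      = c ^ (-(1 : ℝ) / 8) * (1 / c) * S * (c ^ (-(3 : ℝ) / 8) * ‖u‖) * ‖u‖ ^ 2 := by
        rw [norm_smul, Real.norm_of_nonneg (by positivity), mul_pow, hcube]
        ring
    _ ≤ c ^ (-(1 : ℝ) / 8) * (1 / c) * S * 1 * ‖u‖ ^ 2 := by gcongr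
    _ ≤ 3 * lam * ‖u‖ ^ 2 := by rw [mul_one]; gcongr

end Scaling

theorem stmt6_general
    (q : ℕ)
    (Θ : Set (EuclideanSpace ℝ (Fin q))) (hΘopen : IsOpen Θ) (hΘconv : Convex ℝ Θ)
    (H : EuclideanSpace ℝ (Fin q) → ℝ) (hH : ContDiffOn ℝ 3 H Θ)
    (S : ℝ) (hS : ∀ θ ∈ Θ, thirdFrob q H θ ≤ S)
    (n : ℕ) (hn : 1 ≤ n) (lam : ℝ)
    (θhat : EuclideanSpace ℝ (Fin q)) (hθhat : θhat ∈ Θ)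
    (hgrad : fderiv ℝ H θhat = 0)
    (A : Fin q → Fin q → ℝ)
    (hA : ∀ v : EuclideanSpace ℝ (Fin q), 4 * lam * ‖v‖ ^ 2 ≤ ∑ i, ∑ j, v i * A i j * v j)
    (hHess : frobNorm q (fun i j => -(1 / (n : ℝ)) * hessEntry q H θhat i j - A i j) ≤ lam)
    (hthird : (n : ℝ) ^ (-(1 : ℝ) / 8) * (1 / (n : ℝ)) * S ≤ 3 * lam) :
    ∀ u : EuclideanSpace ℝ (Fin q),
      θhat + ((n : ℝ) ^ (-(1 : ℝ) / 2)) • u ∈ Θ → ‖u‖ ≤ (n : ℝ) ^ ((3 : ℝ) / 8) →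
      H (θhat + ((n : ℝ) ^ (-(1 : ℝ) / 2)) • u) - H θhat ≤ -lam * ‖u‖ ^ 2 := by
  intro u hu hnorm
  have hn0 : (0 : ℝ) < n := Nat.cast_pos.2 hn
  set h := (n : ℝ) ^ (-(1 : ℝ) / 2) • u
  have hS0 : 0 ≤ S := (Real.sqrt_nonneg _).trans (hS θhat hθhat)
  have hsegment : ∀ t ∈ Set.Icc (0 : ℝ) 1, θhat + t • h ∈ Θ := fun t ht =>
    hΘconv.add_smul_mem hθhat hu ht
  have htaylor := abs_sub_taylor_two_le (M := ‖h‖ ^ 3 * S)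
    (fun t ht => hH.contDiffAt (hΘopen.mem_nhds (hsegment t ht)))
    (fun t ht => (abs_iteratedFDeriv_three_apply_const_le_thirdFrob H _ h).trans
      (mul_le_mul_of_nonneg_left (hS _ (hsegment t ht)) (by positivity)))
  have hquad := iteratedFDeriv_two_apply_const_le_of_frobNorm_le hn0 hA hHess h
  rw [mul_norm_rpow_neg_half_smul_sq hn0] at hquad
  have hcubic : ‖h‖ ^ 3 * S ≤ 3 * lam * ‖u‖ ^ 2 :=
    norm_rpow_neg_half_smul_pow_three_mul_le hn0 hS0 hnorm hthird
  rw [hgrad, _root_.zero_apply, add_zero] at htaylor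
  linarith [(abs_le.1 htaylor).2]

/-- The deterministic estimate behind (5.9): on the event `G_{1,n}`, for every
`u ∈ Ûₙ ∩ Aₙ` one has `H(θ̂ + n^{-1/2}u) - H(θ̂) ≤ -λ₀ |u|²`. -/
theorem stmt6
    (q : ℕ) (hq : 1 ≤ q)
    (Θ : Set (EuclideanSpace ℝ (Fin q))) (hΘopen : IsOpen Θ) (hΘconv : Convex ℝ Θ)
    (H : EuclideanSpace ℝ (Fin q) → ℝ) (hH : ContDiffOn ℝ 3 H Θ)
    (S : ℝ) (hS : ∀ θ ∈ Θ, thirdFrob q H θ ≤ S)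
    (n : ℕ) (hn : 1 ≤ n) (lam : ℝ) (hlam : 0 < lam)
    (θhat : EuclideanSpace ℝ (Fin q)) (hθhat : θhat ∈ Θ)
    (hgrad : fderiv ℝ H θhat = 0)
    (A : Fin q → Fin q → ℝ) (hAsymm : ∀ i j, A i j = A j i)
    (hA : ∀ v : EuclideanSpace ℝ (Fin q), 4 * lam * ‖v‖ ^ 2 ≤ ∑ i, ∑ j, v i * A i j * v j)
    (hHess : frobNorm q (fun i j => -(1 / (n : ℝ)) * hessEntry q H θhat i j - A i j) ≤ lam)
    (hthird : (n : ℝ) ^ (-(1 : ℝ) / 8) * (1 / (n : ℝ)) * S ≤ 3 * lam) :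
    ∀ u : EuclideanSpace ℝ (Fin q),
      θhat + ((n : ℝ) ^ (-(1 : ℝ) / 2)) • u ∈ Θ → ‖u‖ ≤ (n : ℝ) ^ ((3 : ℝ) / 8) →
      H (θhat + ((n : ℝ) ^ (-(1 : ℝ) / 2)) • u) - H θhat ≤ -lam * ‖u‖ ^ 2 :=
  stmt6_general q Θ hΘopen hΘconv H hH S hS n hn lam θhat hθhat hgrad A hA hHess hthird

end
end

section
/- Let Sigma_0 and Sigma be real symmetric positive definite p x p matrices. Then -(1/2) tr(Sigma^{-1} Sigma_0) - (1/2) log det Sigma <= -p/2 - (1/2) log det Sigma_0, with equality if and only if Sigma = Sigma_0. -/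
/-!
Whitening with `C = Σ₀^{1/2}` replaces `Σ⁻¹Σ₀` by the positive definite matrix `B = C Σ⁻¹ C`,
which has the same trace and satisfies `log det B = log det Σ₀ - log det Σ`. The claim becomes
`p ≤ tr B - log det B`, with equality iff `B = 1`. In terms of the eigenvalues `λᵢ > 0` of `B`
the difference is `∑ᵢ (λᵢ - 1 - log λᵢ)`, a sum of nonnegative terms each vanishing only at `λᵢ = 1`.
-/

open MeasureTheory Filter Matrix

noncomputable section

namespace Real

lemma sub_one_sub_log_nonneg {x : ℝ} (hx : 0 < x) : 0 ≤ x - 1 - log x := by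
  linarith [log_le_sub_one_of_pos hx]

lemma sub_one_sub_log_eq_zero_iff {x : ℝ} (hx : 0 < x) : x - 1 - log x = 0 ↔ x = 1 := by
  refine ⟨fun h => by_contra fun hx1 => ?_, fun h => by simp [h]⟩
  linarith [log_lt_sub_one_of_pos hx hx1]

end Real

section

variable {n : Type*} [Fintype n] [DecidableEq n]

lemma Matrix.mul_inv_mul_eq_one_iff {R : Type*} [CommRing R] {C S : Matrix n n R}
    (hS : IsUnit S.det) : C * S⁻¹ * C = 1 ↔ S = C * C :=
  calc C * S⁻¹ * C = 1 ↔ S⁻¹ * (C * C) = 1 := by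
        rw [mul_assoc, mul_eq_one_comm, mul_assoc]
    _ ↔ S = C * C := ⟨fun h => by rw [← inv_eq_right_inv h, nonsing_inv_nonsing_inv _ hS],
        fun h => h ▸ nonsing_inv_mul _ (h ▸ hS)⟩

namespace Matrix.PosDef

variable {A : Matrix n n ℝ}

lemma trace_sub_log_det_sub_card (hA : A.PosDef) :
    A.trace - Real.log A.det - Fintype.card n =
      ∑ i, (hA.1.eigenvalues i - 1 - Real.log (hA.1.eigenvalues i)) := by
  have hlog : Real.log A.det = ∑ i, Real.log (hA.1.eigenvalues i) := by
    rw [hA.1.det_eq_prod_eigenvalues, RCLike.ofReal_real_eq_id]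
    exact Real.log_prod fun i _ => (hA.eigenvalues_pos i).ne'
  simp only [Finset.sum_sub_distrib, hA.1.trace_eq_sum_eigenvalues, hlog,
    RCLike.ofReal_real_eq_id, id, Finset.sum_const, Finset.card_univ, nsmul_one]
  ring

lemma card_le_trace_sub_log_det (hA : A.PosDef) :
    (Fintype.card n : ℝ) ≤ A.trace - Real.log A.det := by
  have := hA.trace_sub_log_det_sub_card ▸
    Finset.sum_nonneg fun i _ => Real.sub_one_sub_log_nonneg (hA.eigenvalues_pos i)
  linarith

lemma trace_sub_log_det_eq_card_iff (hA : A.PosDef) :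
    A.trace - Real.log A.det = Fintype.card n ↔ A = 1 := by
  refine ⟨fun h => CFC.eq_one_of_spectrum_subset_one (R := ℝ) A ?_ hA.1.isSelfAdjoint,
    by rintro rfl; simp⟩
  rw [← sub_eq_zero, hA.trace_sub_log_det_sub_card, Finset.sum_eq_zero_iff_of_nonneg
    fun i _ => Real.sub_one_sub_log_nonneg (hA.eigenvalues_pos i)] at h
  rw [hA.1.spectrum_real_eq_range_eigenvalues]
  rintro _ ⟨i, rfl⟩
  exact (Real.sub_one_sub_log_eq_zero_iff (hA.eigenvalues_pos i)).1 (h i (Finset.mem_univ i))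

lemma exists_posDef_trace_sub_log_det_eq {S₀ S₁ : Matrix n n ℝ}
    (h₀ : S₀.PosDef) (h₁ : S₁.PosDef) :
    ∃ B : Matrix n n ℝ, B.PosDef ∧
      B.trace - Real.log B.det = (S₁⁻¹ * S₀).trace + Real.log S₁.det - Real.log S₀.det ∧
      (B = 1 ↔ S₁ = S₀) := by
  open scoped MatrixOrder in
  obtain ⟨C, hCh, hCC⟩ : ∃ C : Matrix n n ℝ, Cᴴ = C ∧ C * C = S₀ :=
    ⟨CFC.sqrt S₀, (CFC.sqrt_nonneg S₀).posSemidef.1,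
      CFC.sqrt_mul_sqrt_self S₀ h₀.posSemidef.nonneg⟩
  have hC : IsUnit C := isUnit_of_mul_isUnit_left (hCC ▸ h₀.isUnit)
  have hB := h₁.inv.conjTranspose_mul_mul_same (mulVec_injective_iff_isUnit.2 hC)
  rw [hCh] at hB
  refine ⟨C * S₁⁻¹ * C, hB, ?_, ?_⟩
  · have hdet : (C * S₁⁻¹ * C).det = S₀.det / S₁.det := by
      rw [det_mul, det_mul, det_nonsing_inv, ← hCC, det_mul, Ring.inverse_eq_inv',
        div_eq_mul_inv]
      ring
    rw [trace_mul_cycle, hCC, trace_mul_comm, hdet,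
      Real.log_div h₀.det_pos.ne' h₁.det_pos.ne']
    ring
  · rw [mul_inv_mul_eq_one_iff h₁.det_pos.ne'.isUnit, hCC]

end Matrix.PosDef

end

theorem stmt9_general
    (p : ℕ)
    (S0 S1 : Matrix (Fin p) (Fin p) ℝ) (hS0 : S0.PosDef) (hS1 : S1.PosDef) :
    (-(1 / 2) * (S1⁻¹ * S0).trace - (1 / 2) * Real.log S1.det
        ≤ -(p : ℝ) / 2 - (1 / 2) * Real.log S0.det) ∧
      (-(1 / 2) * (S1⁻¹ * S0).trace - (1 / 2) * Real.log S1.det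
          = -(p : ℝ) / 2 - (1 / 2) * Real.log S0.det ↔ S1 = S0) := by
  obtain ⟨B, hB, hBval, hBone⟩ := hS0.exists_posDef_trace_sub_log_det_eq hS1
  have hle := hB.card_le_trace_sub_log_det
  have heq := hB.trace_sub_log_det_eq_card_iff
  rw [Fintype.card_fin, hBval] at hle heq
  rw [← hBone, ← heq]
  constructor
  · linarith
  · constructor <;> intro h <;> linarith

/-- For positive definite `Σ₀`, `Σ`:
`-(1/2) tr(Σ⁻¹ Σ₀) - (1/2) log det Σ ≤ -p/2 - (1/2) log det Σ₀`,
with equality iff `Σ = Σ₀`. -/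
theorem stmt9
    (p : ℕ) (hp : 1 ≤ p)
    (S0 S1 : Matrix (Fin p) (Fin p) ℝ) (hS0 : S0.PosDef) (hS1 : S1.PosDef) :
    (-(1 / 2) * (S1⁻¹ * S0).trace - (1 / 2) * Real.log S1.det
        ≤ -(p : ℝ) / 2 - (1 / 2) * Real.log S0.det) ∧
      (-(1 / 2) * (S1⁻¹ * S0).trace - (1 / 2) * Real.log S1.det
          = -(p : ℝ) / 2 - (1 / 2) * Real.log S0.det ↔ S1 = S0) :=
  stmt9_general p S0 S1 hS0 hS1

end
end

section
/- Assume (i) the derivative of Sigma at theta_0, as a linear map from R^q to the space of real symmetric p x p matrices, is injective, and (ii) for every theta in cl(Theta), Sigma(theta) = Sigma(theta_0) implies theta = theta_0. Then there exists chi > 0 such that Y(theta) <= -chi |theta - theta_0|^2 for all theta in cl(Theta). -/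
open MeasureTheory Filter Matrix

noncomputable section

/-! The left-hand side is `-gaussianKL (S θ₀) (S θ)`, minus a Kullback–Leibler divergence between
centred Gaussians. With `L = (S θ₀)^{1/2}` and `N = L (S θ)⁻¹ L`, twice that divergence is
`∑ (μᵢ - 1 - log μᵢ)` over the eigenvalues `μᵢ` of `N`, and `x - 1 - log x ≥ (x - 1)² / (√M + 1)²`
on `(0, M]`. On the compact set `S '' cl Θ` the eigenvalues stay bounded, so the divergence
dominates `‖N - 1‖² ≳ ‖S θ - S θ₀‖²` (Frobenius norm). Finally `‖S θ - S θ₀‖ ≳ |θ - θ₀|` on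
`cl Θ`: near `θ₀` because the derivative of `S` at `θ₀` is injective, away from `θ₀` by
identifiability and compactness. -/

attribute [local instance] Matrix.frobeniusNormedAddCommGroup Matrix.frobeniusNormedSpace

section

variable {m n : Type*} [Fintype m] [Fintype n] [DecidableEq n]

lemma Matrix.IsHermitian.trace_cfc {A : Matrix n n ℝ} (hA : A.IsHermitian) (f : ℝ → ℝ) :
    (cfc f A).trace = ∑ i, f (hA.eigenvalues i) := by
  rw [hA.cfc_eq, IsHermitian.cfc, Unitary.conjStarAlgAut_apply, trace_mul_cycle,
    Unitary.coe_star_mul_self, one_mul, trace_diagonal]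
  rfl

omit [DecidableEq n] in
lemma Matrix.frobenius_norm_sq_eq_trace (A : Matrix m n ℝ) : ‖A‖ ^ 2 = (Aᵀ * A).trace := by
  change ‖WithLp.toLp 2 fun i => WithLp.toLp 2 fun j => A i j‖ ^ 2 = _
  simp only [PiLp.norm_sq_eq_of_L2, Real.norm_eq_abs, sq_abs, trace, diag_apply, mul_apply,
    transpose_apply]
  rw [Finset.sum_comm]
  simp [sq]

lemma Matrix.IsHermitian.frobenius_norm_cfc_sq {A : Matrix n n ℝ} (hA : A.IsHermitian)
    (f : ℝ → ℝ) :
    ‖cfc f A‖ ^ 2 = ∑ i, f (hA.eigenvalues i) ^ 2 := by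
  have : ContinuousOn f (spectrum ℝ A) := (finite_real_spectrum (A := A)).continuousOn f
  have hsymm : (cfc f A)ᵀ = cfc f A := by
    rw [← conjTranspose_eq_transpose_of_trivial]
    exact (IsSelfAdjoint.cfc (f := f) (a := A)).star_eq
  rw [frobenius_norm_sq_eq_trace, hsymm, ← cfc_mul f f A, hA.trace_cfc]
  simp [sq]

lemma sq_sub_one_le_mul_sub_one_sub_log {x M : ℝ} (hx : 0 < x) (hxM : x ≤ M) :
    (x - 1) ^ 2 ≤ (√M + 1) ^ 2 * (x - 1 - Real.log x) := by
  obtain ⟨s, hs, rfl⟩ : ∃ s, 0 < s ∧ s ^ 2 = x := ⟨√x, Real.sqrt_pos.2 hx, Real.sq_sqrt hx.le⟩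
  -- `log (s²) = 2 log s ≤ 2 (s - 1)`, so the right-hand factor is at least `(s - 1)²`
  have hlog : Real.log (s ^ 2) ≤ 2 * (s - 1) := by
    rw [Real.log_pow]; push_cast; linarith [Real.log_le_sub_one_of_pos hs]
  have hsM : s ≤ √M := Real.le_sqrt_of_sq_le hxM
  calc (s ^ 2 - 1) ^ 2 = (s + 1) ^ 2 * (s - 1) ^ 2 := by ring
    _ ≤ (√M + 1) ^ 2 * (s ^ 2 - 1 - Real.log (s ^ 2)) := by
      gcongr
      nlinarith

lemma Matrix.PosDef.frobenius_norm_sub_one_sq_le {N : Matrix n n ℝ} (hN : N.PosDef) {M : ℝ}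
    (hM : ‖N‖ ≤ M) :
    ‖N - 1‖ ^ 2 ≤ (√M + 1) ^ 2 * (N.trace - Fintype.card n - Real.log N.det) := by
  have hN_sa : IsSelfAdjoint N := hN.1
  set μ := hN.1.eigenvalues
  have hμ_pos : ∀ i, 0 < μ i := hN.eigenvalues_pos
  have hμ_le : ∀ i, μ i ≤ M := by
    intro i
    have : μ i ^ 2 ≤ ‖N‖ ^ 2 := by
      rw [← cfc_id' ℝ N, hN.1.frobenius_norm_cfc_sq]
      exact Finset.single_le_sum (f := fun j => μ j ^ 2) (fun j _ => sq_nonneg _)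
        (Finset.mem_univ i)
    nlinarith [abs_le_of_sq_le_sq' this (norm_nonneg _), norm_nonneg N]
  have h_sub : N - 1 = cfc (fun x : ℝ => x - 1) N := by
    rw [cfc_sub .., cfc_id' .., cfc_const_one ..]
  have h_log : Real.log N.det = ∑ i, Real.log (μ i) := by
    rw [hN.1.det_eq_prod_eigenvalues, ← Real.log_prod (fun i _ => (hμ_pos i).ne')]
    simp [μ]
  have h_sum :
      N.trace - Fintype.card n - Real.log N.det = ∑ i, (μ i - 1 - Real.log (μ i)) := by
    simp [hN.1.trace_eq_sum_eigenvalues, h_log, Finset.sum_sub_distrib, μ]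
  rw [h_sub, hN.1.frobenius_norm_cfc_sq, h_sum, Finset.mul_sum]
  exact Finset.sum_le_sum fun i _ => sq_sub_one_le_mul_sub_one_sub_log (hμ_pos i) (hμ_le i)

/-- The Kullback–Leibler divergence `KL(𝒩(0, S₀) ‖ 𝒩(0, A))`. -/
def gaussianKL (S₀ A : Matrix n n ℝ) : ℝ :=
  (1 / 2) * (((A⁻¹ - S₀⁻¹) * S₀).trace + Real.log (A.det / S₀.det))

lemma two_mul_gaussianKL_eq {S₀ A L : Matrix n n ℝ} (hS₀ : S₀.PosDef) (hA : A.PosDef)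
    (hL : L * L = S₀) :
    2 * gaussianKL S₀ A =
      (L * A⁻¹ * L).trace - Fintype.card n - Real.log (L * A⁻¹ * L).det := by
  have h_trace : (L * A⁻¹ * L).trace = (A⁻¹ * S₀).trace := by
    rw [trace_mul_cycle, hL, trace_mul_comm]
  have h_det : (L * A⁻¹ * L).det = S₀.det / A.det := by
    rw [det_mul, det_mul, det_nonsing_inv, Ring.inverse_eq_inv', ← hL, det_mul]
    ring
  rw [gaussianKL, h_trace, h_det, sub_mul, trace_sub,
    nonsing_inv_mul _ (S₀.isUnit_iff_isUnit_det.1 hS₀.isUnit), trace_one,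
    Real.log_div hS₀.det_pos.ne' hA.det_pos.ne', Real.log_div hA.det_pos.ne' hS₀.det_pos.ne']
  ring

lemma frobenius_norm_sub_le_of_mul_self_eq {S₀ A L : Matrix n n ℝ} (hA : IsUnit A.det)
    (hL : IsUnit L.det) (hL_sq : L * L = S₀) :
    ‖A - S₀‖ ≤ ‖A‖ * ‖L⁻¹‖ * ‖L * A⁻¹ * L - 1‖ * ‖L‖ := by
  have h_eq : A - S₀ = -(A * L⁻¹ * (L * A⁻¹ * L - 1) * L) := by
    have : A * L⁻¹ * (L * A⁻¹ * L - 1) * L =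
        A * (L⁻¹ * L) * A⁻¹ * (L * L) - A * (L⁻¹ * L) := by
      noncomm_ring
    rw [this, nonsing_inv_mul _ hL, hL_sq, mul_one, mul_nonsing_inv _ hA, one_mul, neg_sub]
  rw [h_eq, norm_neg]
  refine (frobenius_norm_mul _ _).trans ?_
  gcongr
  refine (frobenius_norm_mul _ _).trans ?_
  gcongr
  exact frobenius_norm_mul _ _

open scoped MatrixOrder in
lemma exists_norm_sub_sq_le_mul_gaussianKL {S₀ : Matrix n n ℝ} (hS₀ : S₀.PosDef) (B₁ B₂ : ℝ) :
    ∃ C > 0, ∀ A : Matrix n n ℝ, A.PosDef → ‖A‖ ≤ B₁ → ‖A⁻¹‖ ≤ B₂ →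
      ‖A - S₀‖ ^ 2 ≤ C * gaussianKL S₀ A := by
  set L := CFC.sqrt S₀
  have hL_sq : L * L = S₀ := CFC.sqrt_mul_sqrt_self S₀ hS₀.posSemidef.nonneg
  have hL_herm : L.IsHermitian := (nonneg_iff_posSemidef.1 (CFC.sqrt_nonneg S₀)).isHermitian
  have hL_unit : IsUnit L := isUnit_of_mul_isUnit_left (hL_sq ▸ hS₀.isUnit)
  set C₁ := B₁ * ‖L⁻¹‖ * ‖L‖
  set M := ‖L‖ ^ 2 * B₂
  refine ⟨2 * (C₁ ^ 2 + 1) * (√M + 1) ^ 2, by positivity, fun A hA hA₁ hA₂ => ?_⟩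
  set N := L * A⁻¹ * L
  have hN : N.PosDef := by
    simpa only [N, hL_herm.eq] using
      hA.inv.conjTranspose_mul_mul_same (mulVec_injective_of_isUnit hL_unit)
  have hNM : ‖N‖ ≤ M := calc
    ‖N‖ ≤ ‖L‖ * ‖A⁻¹‖ * ‖L‖ :=
      (frobenius_norm_mul _ _).trans (by gcongr; exact frobenius_norm_mul _ _)
    _ ≤ M := by rw [show M = ‖L‖ * B₂ * ‖L‖ by ring]; gcongr
  have h_norm : ‖A - S₀‖ ≤ C₁ * ‖N - 1‖ := calc
    ‖A - S₀‖ ≤ ‖A‖ * ‖L⁻¹‖ * ‖N - 1‖ * ‖L‖ :=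
      frobenius_norm_sub_le_of_mul_self_eq (A.isUnit_iff_isUnit_det.1 hA.isUnit)
        (L.isUnit_iff_isUnit_det.1 hL_unit) hL_sq
    _ ≤ C₁ * ‖N - 1‖ := by
      rw [show C₁ * ‖N - 1‖ = B₁ * ‖L⁻¹‖ * ‖N - 1‖ * ‖L‖ by ring]
      gcongr
  calc ‖A - S₀‖ ^ 2 ≤ (C₁ ^ 2 + 1) * ‖N - 1‖ ^ 2 := by
        nlinarith [norm_nonneg (A - S₀), norm_nonneg (N - 1)]
    _ ≤ (C₁ ^ 2 + 1) * ((√M + 1) ^ 2 * (N.trace - Fintype.card n - Real.log N.det)) := by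
        gcongr; exact hN.frobenius_norm_sub_one_sq_le hNM
    _ = 2 * (C₁ ^ 2 + 1) * (√M + 1) ^ 2 * gaussianKL S₀ A := by
        rw [← two_mul_gaussianKL_eq hS₀ hA hL_sq]; ring

lemma exists_pos_mul_norm_sub_sq_le_gaussianKL {S₀ : Matrix n n ℝ} (hS₀ : S₀.PosDef)
    {K : Set (Matrix n n ℝ)} (hK : IsCompact K) (hK_pos : ∀ A ∈ K, A.PosDef) :
    ∃ c > 0, ∀ A ∈ K, c * ‖A - S₀‖ ^ 2 ≤ gaussianKL S₀ A := by
  have h_inv : ContinuousOn (·⁻¹) K := fun A hA =>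
    (continuousAt_matrix_inv A (Ring.inverse_eq_inv' (G₀ := ℝ) ▸
      continuousAt_inv₀ (hK_pos A hA).det_pos.ne')).continuousWithinAt
  obtain ⟨B₁, hB₁⟩ := hK.exists_bound_of_continuousOn continuousOn_id
  obtain ⟨B₂, hB₂⟩ := hK.exists_bound_of_continuousOn h_inv
  obtain ⟨C, hC, h_le⟩ := exists_norm_sub_sq_le_mul_gaussianKL hS₀ B₁ B₂
  refine ⟨C⁻¹, inv_pos.2 hC, fun A hA => ?_⟩
  rw [inv_mul_le_iff₀ hC]
  exact h_le A (hK_pos A hA) (hB₁ A hA) (hB₂ A hA)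

theorem exists_pos_mul_norm_sub_le_norm_sub_of_hasFDerivAt {E F : Type*}
    [NormedAddCommGroup E] [NormedSpace ℝ E] [FiniteDimensional ℝ E]
    [NormedAddCommGroup F] [NormedSpace ℝ F] {f : E → F} {f' : E →L[ℝ] F} {K : Set E} {x₀ : E}
    (hK : IsCompact K) (hf : ContinuousOn f K) (hf' : HasFDerivAt f f' x₀)
    (h_inj : Function.Injective f') (h_ident : ∀ x ∈ K, f x = f x₀ → x = x₀) :
    ∃ c > 0, ∀ x ∈ K, c * ‖x - x₀‖ ≤ ‖f x - f x₀‖ := by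
  obtain ⟨k, hk, h_anti⟩ := (f' : E →ₗ[ℝ] F).injective_iff_antilipschitz.1 h_inj
  set σ : ℝ := (k : ℝ)⁻¹
  have hσ : 0 < σ := inv_pos.2 (NNReal.coe_pos.2 hk)
  have h_lower : ∀ v, σ * ‖v‖ ≤ ‖f' v‖ := fun v => by
    rw [inv_mul_le_iff₀ (NNReal.coe_pos.2 hk)]
    exact ContinuousLinearMap.bound_of_antilipschitz f' h_anti v
  obtain ⟨δ, hδ, h_near⟩ := Metric.eventually_nhds_iff.1 (hf'.isLittleO.bound (half_pos hσ))
  have h_ball : ∀ x, dist x x₀ < δ → σ / 2 * ‖x - x₀‖ ≤ ‖f x - f x₀‖ := fun x hx => by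
    have h := h_near hx
    have h_tri : ‖f' (x - x₀)‖ ≤ ‖f x - f x₀‖ + ‖f x - f x₀ - f' (x - x₀)‖ := by
      simpa using norm_sub_le (f x - f x₀) (f x - f x₀ - f' (x - x₀))
    linarith [h_lower (x - x₀)]
  set K' := K ∩ {x | δ ≤ dist x x₀}
  have hK' : IsCompact K' :=
    hK.inter_right (isClosed_le continuous_const (continuous_id.dist continuous_const))
  have h_dist : ∀ x ∈ K', 0 < ‖x - x₀‖ := fun x hx => by
    rw [← dist_eq_norm]; exact hδ.trans_le hx.2
  have h_ne : ∀ x ∈ K', 0 < ‖f x - f x₀‖ / ‖x - x₀‖ := fun x hx => by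
    refine div_pos (norm_pos_iff.2 fun h => (h_dist x hx).ne' ?_) (h_dist x hx)
    simp [h_ident x hx.1 (sub_eq_zero.1 h)]
  have h_cont : ContinuousOn (fun x => ‖f x - f x₀‖ / ‖x - x₀‖) K' :=
    ((hf.mono Set.inter_subset_left).sub continuousOn_const).norm.div
      (continuous_id.sub continuous_const).norm.continuousOn fun x hx => (h_dist x hx).ne'
  obtain ⟨b, hb, h_far⟩ := hK'.exists_forall_le' h_cont h_ne
  refine ⟨min (σ / 2) b, lt_min (half_pos hσ) hb, fun x hx => ?_⟩
  by_cases hx₀ : dist x x₀ < δ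
  · exact (mul_le_mul_of_nonneg_right (min_le_left _ _) (norm_nonneg _)).trans (h_ball x hx₀)
  · have hxK' : x ∈ K' := ⟨hx, not_lt.1 hx₀⟩
    have : b ≤ ‖f x - f x₀‖ / ‖x - x₀‖ := h_far x hxK'
    rw [le_div_iff₀ (h_dist x hxK')] at this
    exact (mul_le_mul_of_nonneg_right (min_le_right _ _) (norm_nonneg _)).trans this

omit [DecidableEq n] in
lemma Matrix.exists_hasFDerivAt_of_differentiableAt {E : Type*} [NormedAddCommGroup E]
    [NormedSpace ℝ E] {S : E → Matrix m n ℝ} {x : E}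
    (hS : ∀ i j, DifferentiableAt ℝ (fun y => S y i j) x) :
    ∃ S' : E →L[ℝ] Matrix m n ℝ, HasFDerivAt S S' x ∧
      ∀ v i j, S' v i j = fderiv ℝ (fun y => S y i j) x v := by
  let e := (Matrix.ofLinearEquiv ℝ (m := m) (n := n) (α := ℝ)).toContinuousLinearEquiv
  have hD : HasFDerivAt (fun y i j => S y i j)
      (ContinuousLinearMap.pi fun i => ContinuousLinearMap.pi fun j =>
        fderiv ℝ (fun y => S y i j) x) x :=
    hasFDerivAt_pi.2 fun i => hasFDerivAt_pi.2 fun j => (hS i j).hasFDerivAt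
  exact ⟨_, e.hasFDerivAt.comp x hD, fun _ _ _ => rfl⟩

end

theorem stmt10_general
    (p q : ℕ)
    (Θ : Set (EuclideanSpace ℝ (Fin q)))
    (hΘbdd : Bornology.IsBounded Θ)
    (θ0 : EuclideanSpace ℝ (Fin q)) (hθ0 : θ0 ∈ Θ)
    (S : EuclideanSpace ℝ (Fin q) → Matrix (Fin p) (Fin p) ℝ)
    (hSsmooth : ∀ i j, ContDiff ℝ 2 (fun θ => S θ i j))
    (hSpos : ∀ θ ∈ closure Θ, (S θ).PosDef)
    (hinj : Function.Injective (fun v : EuclideanSpace ℝ (Fin q) =>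
      Matrix.of (fun i j : Fin p => fderiv ℝ (fun θ => S θ i j) θ0 v)))
    (hident : ∀ θ ∈ closure Θ, S θ = S θ0 → θ = θ0) :
    ∃ χ > (0 : ℝ), ∀ θ ∈ closure Θ,
      -(1 / 2) * (((S θ)⁻¹ - (S θ0)⁻¹) * S θ0).trace
          - (1 / 2) * Real.log ((S θ).det / (S θ0).det)
        ≤ -χ * ‖θ - θ0‖ ^ 2 := by
  have hK : IsCompact (closure Θ) := hΘbdd.isCompact_closure
  have hS_diff : ∀ θ, ∃ S' : _ →L[ℝ] Matrix (Fin p) (Fin p) ℝ, HasFDerivAt S S' θ ∧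
      ∀ v i j, S' v i j = fderiv ℝ (fun θ => S θ i j) θ v := fun θ =>
    exists_hasFDerivAt_of_differentiableAt fun i j =>
      ((hSsmooth i j).differentiable (by norm_num)).differentiableAt
  have hS_cont : Continuous S := continuous_iff_continuousAt.2 fun θ => by
    obtain ⟨_, h, -⟩ := hS_diff θ
    exact h.continuousAt
  obtain ⟨S', hS', hS'_apply⟩ := hS_diff θ0
  have hS'_inj : Function.Injective S' := by
    convert hinj using 2 with v; ext i j; exact hS'_apply v i j
  obtain ⟨c₁, hc₁, h_lin⟩ := exists_pos_mul_norm_sub_le_norm_sub_of_hasFDerivAt hK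
    hS_cont.continuousOn hS' hS'_inj hident
  obtain ⟨c₂, hc₂, h_KL⟩ := exists_pos_mul_norm_sub_sq_le_gaussianKL
    (hSpos θ0 (subset_closure hθ0)) (hK.image hS_cont)
    (by rintro _ ⟨θ, hθ, rfl⟩; exact hSpos θ hθ)
  refine ⟨c₂ * c₁ ^ 2, by positivity, fun θ hθ => ?_⟩
  calc -(1 / 2) * (((S θ)⁻¹ - (S θ0)⁻¹) * S θ0).trace
          - (1 / 2) * Real.log ((S θ).det / (S θ0).det)
      = -gaussianKL (S θ0) (S θ) := by rw [gaussianKL]; ring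
    _ ≤ -(c₂ * (c₁ * ‖θ - θ0‖) ^ 2) := by
      gcongr
      refine le_trans ?_ (h_KL _ ⟨θ, hθ, rfl⟩)
      gcongr
      exact h_lin θ hθ
    _ = -(c₂ * c₁ ^ 2) * ‖θ - θ0‖ ^ 2 := by ring

/-- Remark after [C1]: if the derivative of `Σ` at `θ₀` is injective and `Σ` is
identifiable at `θ₀` on `cl Θ`, then there is `χ > 0` with
`Y(θ) ≤ -χ |θ - θ₀|²` on `cl Θ`. -/
theorem stmt10
    (p q : ℕ) (hp : 1 ≤ p) (hq : 1 ≤ q)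
    (Θ : Set (EuclideanSpace ℝ (Fin q)))
    (hΘne : Θ.Nonempty) (hΘbdd : Bornology.IsBounded Θ) (hΘopen : IsOpen Θ)
    (hΘconv : Convex ℝ Θ)
    (θ0 : EuclideanSpace ℝ (Fin q)) (hθ0 : θ0 ∈ Θ)
    (S : EuclideanSpace ℝ (Fin q) → Matrix (Fin p) (Fin p) ℝ)
    (hSsymm : ∀ θ, (S θ).IsSymm)
    (hSsmooth : ∀ i j, ContDiff ℝ 2 (fun θ => S θ i j))
    (hSpos : ∀ θ ∈ closure Θ, (S θ).PosDef)
    (hinj : Function.Injective (fun v : EuclideanSpace ℝ (Fin q) =>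
      Matrix.of (fun i j : Fin p => fderiv ℝ (fun θ => S θ i j) θ0 v)))
    (hident : ∀ θ ∈ closure Θ, S θ = S θ0 → θ = θ0) :
    ∃ χ > (0 : ℝ), ∀ θ ∈ closure Θ,
      -(1 / 2) * (((S θ)⁻¹ - (S θ0)⁻¹) * S θ0).trace
          - (1 / 2) * Real.log ((S θ).det / (S θ0).det)
        ≤ -χ * ‖θ - θ0‖ ^ 2 :=
  stmt10_general p q Θ hΘbdd θ0 hθ0 S hSsmooth hSpos hinj hident
end
end

section
/- Assume sup_{theta in cl(Theta*)} |(1/n) H*_n(theta) - K*(theta)| -> 0 in probability, sup_{theta in cl(Theta)} |(1/n) H_n(theta) - K(theta)| -> 0 in probability, and sup_{theta in cl(Theta)} K(theta) < sup_{theta in cl(Theta*)} K*(theta). Then P( -2 H*_n(hat_theta*_n) + q* log n < -2 H_n(hat_theta_n) + q log n ) -> 1 as n -> infinity. -/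
/-!
Let `θ₀ ∈ cl Θ*` with `K*(θ₀) > sup K`, and put `ε = (K*(θ₀) - sup K) / 4`. Off the two events
where a normalized criterion deviates from its limit by more than `ε` uniformly, whose
probabilities tend to `0`, we have `H*ₙ(θ̂*ₙ) ≥ H*ₙ(θ₀) ≥ n (K*(θ₀) - ε)` and
`Hₙ(θ̂ₙ) ≤ n (K(θ̂ₙ) + ε) ≤ n (sup K + ε)`. The resulting gap `n (K*(θ₀) - sup K)` between
`-2 Hₙ(θ̂ₙ)` and the bound on `-2 H*ₙ(θ̂*ₙ)` eventually beats the penalty `q* log n`, since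
`log n = o(n)`.
-/

open MeasureTheory Filter Matrix

noncomputable section

open Topology

namespace Real

variable {α : Type*} {s : Set α} {f : α → ℝ}

theorem le_biSup_of_bddAbove (hf : BddAbove (f '' s)) {x : α} (hx : x ∈ s) :
    f x ≤ ⨆ y ∈ s, f y := by
  refine le_ciSup₂ (f := fun y (_ : y ∈ s) => f y) ?_ x hx
  obtain ⟨M, hM⟩ := hf
  refine ⟨M, ?_⟩
  simp only [mem_upperBounds, Set.mem_iUnion, Set.mem_range]
  rintro _ ⟨y, hy, rfl⟩
  exact hM ⟨y, hy, rfl⟩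

theorem biSup_nonneg_of_exists_notMem (hs : ∃ x, x ∉ s) : 0 ≤ ⨆ x ∈ s, f x := by
  obtain ⟨x, hx⟩ := hs
  refine iSup_nonneg' ⟨x, ?_⟩
  have : IsEmpty (x ∈ s) := ⟨hx⟩
  rw [iSup_of_isEmpty]

theorem exists_lt_of_lt_biSup {a : ℝ} (ha : 0 ≤ a) (h : a < ⨆ x ∈ s, f x) :
    ∃ x ∈ s, a < f x := by
  by_contra! hle
  exact h.not_ge (Real.iSup_le (fun x => Real.iSup_le (hle x) ha) ha)

end Real

theorem Bornology.IsBounded.exists_notMem {E : Type*} [NormedAddCommGroup E] [NormedSpace ℝ E]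
    [Nontrivial E] {s : Set E} (hs : Bornology.IsBounded s) : ∃ x, x ∉ s := by
  by_contra! h
  exact NormedSpace.unbounded_univ ℝ E (by rwa [Set.eq_univ_of_forall h] at hs)

theorem abs_sub_mul_le_of_biSup_abs_le {E : Type*} {s : Set E} {F G : E → ℝ} {n ε : ℝ}
    (hn : 0 < n) (hbdd : BddAbove ((fun θ => |1 / n * F θ - G θ|) '' s))
    (hsup : (⨆ θ ∈ s, |1 / n * F θ - G θ|) ≤ ε) {θ : E} (hθ : θ ∈ s) :
    |F θ - n * G θ| ≤ n * ε := by
  have hθε := (Real.le_biSup_of_bddAbove hbdd hθ).trans hsup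
  calc |F θ - n * G θ| = |n * (1 / n * F θ - G θ)| := by field_simp
    _ = n * |1 / n * F θ - G θ| := by rw [abs_mul, abs_of_pos hn]
    _ ≤ n * ε := mul_le_mul_of_nonneg_left hθε hn.le

theorem eventually_mul_log_lt_mul (c : ℝ) {δ : ℝ} (hδ : 0 < δ) :
    ∀ᶠ n : ℕ in atTop, c * Real.log n < δ * n := by
  have hlog := (Real.isLittleO_log_id_atTop.const_mul_left c).def (half_pos hδ)
  filter_upwards [tendsto_natCast_atTop_atTop.eventually hlog, eventually_gt_atTop 0]
    with n hn hn0
  have hn0' : (0 : ℝ) < n := by exact_mod_cast hn0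
  rw [Real.norm_eq_abs, Real.norm_eq_abs, id, abs_of_pos hn0'] at hn
  linarith [le_abs_self (c * Real.log n), mul_pos hδ hn0']

theorem tendsto_measure_nhds_one_of_compl_subset_union {Ω ι : Type*} [MeasurableSpace Ω]
    {μ : Measure Ω} [IsProbabilityMeasure μ] {l : Filter ι} {E A B : ι → Set Ω}
    (hA : Tendsto (fun i => μ (A i)) l (𝓝 0)) (hB : Tendsto (fun i => μ (B i)) l (𝓝 0))
    (hsub : ∀ᶠ i in l, (E i)ᶜ ⊆ A i ∪ B i) :
    Tendsto (fun i => μ (E i)) l (𝓝 1) := by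
  have hcompl : Tendsto (fun i => μ (E i)ᶜ) l (𝓝 0) := by
    refine tendsto_of_tendsto_of_tendsto_of_le_of_le' tendsto_const_nhds (by simpa using hA.add hB)
      (Eventually.of_forall fun _ => zero_le) ?_
    filter_upwards [hsub] with i hi
    exact (measure_mono hi).trans (measure_union_le _ _)
  have hlower : Tendsto (fun i => 1 - μ (E i)ᶜ) l (𝓝 1) := by
    simpa using ENNReal.Tendsto.sub tendsto_const_nhds hcompl (Or.inl ENNReal.one_ne_top)
  refine tendsto_of_tendsto_of_tendsto_of_le_of_le hlower tendsto_const_nhds (fun i => ?_)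
    (fun _ => prob_le_one)
  have := measure_univ_le_add_compl (μ := μ) (E i)
  rw [measure_univ] at this
  exact tsub_le_iff_right.2 this

theorem stmt14_general
    {Ω : Type*} [MeasurableSpace Ω] (P : Measure Ω) [IsProbabilityMeasure P]
    (q qs : ℕ) (hq : 1 ≤ q)
    (Θ : Set (EuclideanSpace ℝ (Fin q))) (Θs : Set (EuclideanSpace ℝ (Fin qs)))
    (hΘbdd : Bornology.IsBounded Θ)
    (hΘsbdd : Bornology.IsBounded Θs)
    (H : ℕ → Ω → EuclideanSpace ℝ (Fin q) → ℝ)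
    (Hs : ℕ → Ω → EuclideanSpace ℝ (Fin qs) → ℝ)
    (hHcont : ∀ n ω, Continuous (H n ω))
    (hHscont : ∀ n ω, Continuous (Hs n ω))
    (θhat : ℕ → Ω → EuclideanSpace ℝ (Fin q))
    (hθhatmem : ∀ n ω, θhat n ω ∈ closure Θ)
    (θhats : ℕ → Ω → EuclideanSpace ℝ (Fin qs))
    (hθhatsmax : ∀ n ω, ∀ θ ∈ closure Θs, Hs n ω θ ≤ Hs n ω (θhats n ω))
    (K : EuclideanSpace ℝ (Fin q) → ℝ) (Ks : EuclideanSpace ℝ (Fin qs) → ℝ)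
    (hKcont : ContinuousOn K (closure Θ)) (hKscont : ContinuousOn Ks (closure Θs))
    -- uniform convergence in probability of (1/n) H*ₙ to K*
    (h1 : ∀ ε > 0, Tendsto (fun n : ℕ =>
      P {ω | ε < ⨆ θ ∈ closure Θs, |(1 / (n : ℝ)) * Hs n ω θ - Ks θ|}) atTop (nhds 0))
    -- uniform convergence in probability of (1/n) Hₙ to K
    (h2 : ∀ ε > 0, Tendsto (fun n : ℕ =>
      P {ω | ε < ⨆ θ ∈ closure Θ, |(1 / (n : ℝ)) * H n ω θ - K θ|}) atTop (nhds 0))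
    -- sup K < sup K*
    (h3 : (⨆ θ ∈ closure Θ, K θ) < ⨆ θ ∈ closure Θs, Ks θ) :
    Tendsto (fun n : ℕ => P {ω |
        -2 * Hs n ω (θhats n ω) + (qs : ℝ) * Real.log n
          < -2 * H n ω (θhat n ω) + (q : ℝ) * Real.log n})
      atTop (nhds 1) := by
  have : Nonempty (Fin q) := ⟨⟨0, hq⟩⟩
  have hcΘ : IsCompact (closure Θ) := hΘbdd.isCompact_closure
  have hcΘs : IsCompact (closure Θs) := hΘsbdd.isCompact_closure
  set A := ⨆ θ ∈ closure Θ, K θ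
  have hKA : ∀ θ ∈ closure Θ, K θ ≤ A := fun θ hθ =>
    Real.le_biSup_of_bddAbove (hcΘ.bddAbove_image hKcont) hθ
  -- The terms of `A` at points off `closure Θ` are the junk value `0`, so `A ≥ 0`, and then
  -- `A < ⨆ θ ∈ closure Θs, Ks θ` produces a genuine point of `closure Θs`.
  obtain ⟨θ₀, hθ₀, hAθ₀⟩ := Real.exists_lt_of_lt_biSup
    (Real.biSup_nonneg_of_exists_notMem hΘbdd.closure.exists_notMem) h3
  have hε : 0 < (Ks θ₀ - A) / 4 := by linarith
  refine tendsto_measure_nhds_one_of_compl_subset_union (h1 _ hε) (h2 _ hε) ?_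
  filter_upwards [eventually_mul_log_lt_mul qs (sub_pos.2 hAθ₀), eventually_gt_atTop 0]
    with n hlog hn
  rw [Set.compl_subset_comm]
  intro ω hω
  simp only [Set.mem_compl_iff, Set.mem_union, Set.mem_ofPred_eq, not_or, not_lt] at hω ⊢
  have hn' : (0 : ℝ) < n := by exact_mod_cast hn
  have hHs := abs_sub_mul_le_of_biSup_abs_le hn' (hcΘs.bddAbove_image
    ((continuous_const.mul (hHscont n ω)).continuousOn.sub hKscont).abs) hω.1 hθ₀
  have hH := abs_sub_mul_le_of_biSup_abs_le hn' (hcΘ.bddAbove_image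
    ((continuous_const.mul (hHcont n ω)).continuousOn.sub hKcont).abs) hω.2 (hθhatmem n ω)
  have hKn := mul_le_mul_of_nonneg_left (hKA _ (hθhatmem n ω)) hn'.le
  have hq_log : 0 ≤ (q : ℝ) * Real.log n := by positivity
  rw [abs_le] at hHs hH
  linarith [hθhatsmax n ω θ₀ hθ₀]

/-- Theorem 3.2 (no asymptotic selection of misspecified models): if the correctly
specified model has a strictly larger limiting criterion value, then
`P(QBIC*ₙ < QBICₙ) → 1`. -/
theorem stmt14
    {Ω : Type*} [MeasurableSpace Ω] (P : Measure Ω) [IsProbabilityMeasure P]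
    (q qs : ℕ) (hq : 1 ≤ q) (hqs : 1 ≤ qs)
    (Θ : Set (EuclideanSpace ℝ (Fin q))) (Θs : Set (EuclideanSpace ℝ (Fin qs)))
    (hΘne : Θ.Nonempty) (hΘbdd : Bornology.IsBounded Θ) (hΘopen : IsOpen Θ)
    (hΘsne : Θs.Nonempty) (hΘsbdd : Bornology.IsBounded Θs) (hΘsopen : IsOpen Θs)
    (H : ℕ → Ω → EuclideanSpace ℝ (Fin q) → ℝ)
    (Hs : ℕ → Ω → EuclideanSpace ℝ (Fin qs) → ℝ)
    (hHmeas : ∀ n, Measurable (fun pr : Ω × EuclideanSpace ℝ (Fin q) => H n pr.1 pr.2))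
    (hHsmeas : ∀ n, Measurable (fun pr : Ω × EuclideanSpace ℝ (Fin qs) => Hs n pr.1 pr.2))
    (hHcont : ∀ n ω, Continuous (H n ω))
    (hHscont : ∀ n ω, Continuous (Hs n ω))
    (θhat : ℕ → Ω → EuclideanSpace ℝ (Fin q))
    (hθhatmeas : ∀ n, Measurable (θhat n))
    (hθhatmem : ∀ n ω, θhat n ω ∈ closure Θ)
    (hθhatmax : ∀ n ω, ∀ θ ∈ closure Θ, H n ω θ ≤ H n ω (θhat n ω))
    (θhats : ℕ → Ω → EuclideanSpace ℝ (Fin qs))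
    (hθhatsmeas : ∀ n, Measurable (θhats n))
    (hθhatsmem : ∀ n ω, θhats n ω ∈ closure Θs)
    (hθhatsmax : ∀ n ω, ∀ θ ∈ closure Θs, Hs n ω θ ≤ Hs n ω (θhats n ω))
    (K : EuclideanSpace ℝ (Fin q) → ℝ) (Ks : EuclideanSpace ℝ (Fin qs) → ℝ)
    (hKcont : ContinuousOn K (closure Θ)) (hKscont : ContinuousOn Ks (closure Θs))
    -- uniform convergence in probability of (1/n) H*ₙ to K*
    (h1 : ∀ ε > 0, Tendsto (fun n : ℕ =>
      P {ω | ε < ⨆ θ ∈ closure Θs, |(1 / (n : ℝ)) * Hs n ω θ - Ks θ|}) atTop (nhds 0))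
    -- uniform convergence in probability of (1/n) Hₙ to K
    (h2 : ∀ ε > 0, Tendsto (fun n : ℕ =>
      P {ω | ε < ⨆ θ ∈ closure Θ, |(1 / (n : ℝ)) * H n ω θ - K θ|}) atTop (nhds 0))
    -- sup K < sup K*
    (h3 : (⨆ θ ∈ closure Θ, K θ) < ⨆ θ ∈ closure Θs, Ks θ) :
    Tendsto (fun n : ℕ => P {ω |
        -2 * Hs n ω (θhats n ω) + (qs : ℝ) * Real.log n
          < -2 * H n ω (θhat n ω) + (q : ℝ) * Real.log n})
      atTop (nhds 1) :=
  stmt14_general P q qs hq Θ Θs hΘbdd hΘsbdd H Hs hHcont hHscont θhat hθhatmem θhats hθhatsmax K Ks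
    hKcont hKscont h1 h2 h3

end
end

section
/- For every Lebesgue-integrable function g : R^q -> [0, infinity), the random variables Integral_{hat_U_n intersect A_n} g(u) du converge in probability to Integral_{R^q} g(u) du as n -> infinity. -/
/-!
Since `Θ` is open, it contains a ball `B(θ₀, r)`. Once `‖θ̂ₙ - θ₀‖ ≤ r/2`, the set
`Ûₙ ∩ Aₙ` contains the ball `B̄(0, R)` for every fixed `R` as soon as `n^{-1/2} R < r/2` and
`R ≤ n^{3/8}`. As `g ≥ 0`, the integral over `Ûₙ ∩ Aₙ` is then squeezed between
`∫_{B̄(0, R)} g` and `∫ g`, which are `ε`-close for `R` large. So the event of an `ε`-deviation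
is eventually contained in `{‖θ̂ₙ - θ₀‖ > r/2}`, whose probability tends to `0`.
-/

open MeasureTheory Filter Matrix

noncomputable section

open Metric Set Topology

theorem tendsto_setIntegral_closedBall_nat {X E : Type*} [PseudoMetricSpace X] [MeasurableSpace X]
    [OpensMeasurableSpace X] {μ : Measure X} [NormedAddCommGroup E] [NormedSpace ℝ E]
    {f : X → E} (hf : Integrable f μ) (x : X) :
    Tendsto (fun n : ℕ => ∫ u in closedBall x n, f u ∂μ) atTop (𝓝 (∫ u, f u ∂μ)) := by
  have h := tendsto_setIntegral_of_monotone (μ := μ) (s := fun n : ℕ => closedBall x n)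
    (fun n => measurableSet_closedBall)
    (fun m n hmn => closedBall_subset_closedBall (Nat.cast_le.mpr hmn))
    (by rw [iUnion_closedBall_nat]; exact hf.integrableOn)
  rwa [iUnion_closedBall_nat, Measure.restrict_univ] at h

theorem abs_setIntegral_sub_integral_le_of_subset {X : Type*} [MeasurableSpace X]
    {μ : Measure X} {f : X → ℝ} (hf : Integrable f μ) (hf0 : ∀ x, 0 ≤ f x) {s t : Set X}
    (hts : t ⊆ s) :
    |∫ x in s, f x ∂μ - ∫ x, f x ∂μ| ≤ ∫ x, f x ∂μ - ∫ x in t, f x ∂μ := by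
  have hs : ∫ x in s, f x ∂μ ≤ ∫ x, f x ∂μ :=
    setIntegral_le_integral hf (Eventually.of_forall hf0)
  have hts : ∫ x in t, f x ∂μ ≤ ∫ x in s, f x ∂μ :=
    setIntegral_mono_set hf.integrableOn (Eventually.of_forall hf0) hts.eventuallyLE
  rw [abs_sub_comm, abs_of_nonneg (sub_nonneg.mpr hs)]
  linarith

theorem closedBall_zero_subset_setOf_add_smul_mem {E : Type*} [SeminormedAddCommGroup E]
    [NormedSpace ℝ E] {Θ : Set E} {θ₀ θ : E} {r s R : ℝ} (hΘ : ball θ₀ r ⊆ Θ) (hs : 0 ≤ s)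
    (h : ‖θ - θ₀‖ + s * R < r) :
    closedBall 0 R ⊆ {u | θ + s • u ∈ Θ} := by
  intro u hu
  rw [mem_closedBall_zero_iff] at hu
  apply hΘ
  rw [mem_ball, dist_eq_norm]
  calc ‖θ + s • u - θ₀‖ = ‖(θ - θ₀) + s • u‖ := by rw [add_sub_right_comm]
    _ ≤ ‖θ - θ₀‖ + s * ‖u‖ := by
      grw [norm_add_le, norm_smul, Real.norm_of_nonneg hs]
    _ ≤ ‖θ - θ₀‖ + s * R := by gcongr
    _ < r := h

theorem eventually_le_rpow_and_rpow_mul_lt {a b : ℝ} (ha : 0 < a) (hb : b < 0) (R : ℝ) {δ : ℝ}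
    (hδ : 0 < δ) : ∀ᶠ n : ℕ in atTop, R ≤ (n : ℝ) ^ a ∧ (n : ℝ) ^ b * R < δ := by
  have hgrow : Tendsto (fun n : ℕ => (n : ℝ) ^ a) atTop atTop :=
    (tendsto_rpow_atTop ha).comp tendsto_natCast_atTop_atTop
  have hdecay : Tendsto (fun n : ℕ => (n : ℝ) ^ b * R) atTop (𝓝 0) := by
    have h := ((tendsto_rpow_neg_atTop (neg_pos.mpr hb)).comp
      tendsto_natCast_atTop_atTop).mul_const R
    simpa only [neg_neg, zero_mul, Function.comp_def] using h
  exact (hgrow.eventually_ge_atTop R).and (hdecay.eventually_lt_const hδ)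

theorem stmt17_general
    {Ω : Type*} [MeasurableSpace Ω] (P : Measure Ω)
    (q : ℕ)
    (Θ : Set (EuclideanSpace ℝ (Fin q))) (hΘopen : IsOpen Θ)
    (θ0 : EuclideanSpace ℝ (Fin q)) (hθ0 : θ0 ∈ Θ)
    (θhat : ℕ → Ω → EuclideanSpace ℝ (Fin q))
    (h1 : ∀ ε > 0, Tendsto (fun n => P {ω | ε < ‖θhat n ω - θ0‖}) atTop (nhds 0))
    (g : EuclideanSpace ℝ (Fin q) → ℝ) (hgint : Integrable g) (hgnonneg : ∀ u, 0 ≤ g u) :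
    TendstoInProb P (fun n ω =>
      ∫ u in {u : EuclideanSpace ℝ (Fin q) |
            θhat n ω + ((n : ℝ) ^ (-(1 : ℝ) / 2)) • u ∈ Θ} ∩
          {u : EuclideanSpace ℝ (Fin q) | ‖u‖ ≤ (n : ℝ) ^ ((3 : ℝ) / 8)}, g u)
      (∫ u, g u) := by
  intro ε hε
  obtain ⟨r, hr, hball⟩ := Metric.isOpen_iff.mp hΘopen θ0 hθ0
  obtain ⟨R, hR⟩ := ((tendsto_setIntegral_closedBall_nat hgint 0).eventually
    (Ioi_mem_nhds (sub_lt_self (∫ u, g u) hε))).exists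
  refine tendsto_of_tendsto_of_tendsto_of_le_of_le' tendsto_const_nhds (h1 (r / 2) (by positivity))
    (Eventually.of_forall fun n => zero_le) ?_
  filter_upwards [eventually_le_rpow_and_rpow_mul_lt (a := 3 / 8) (b := -1 / 2) (by norm_num)
      (by norm_num) R (half_pos hr)] with n ⟨hRn, hsR⟩
  refine measure_mono fun ω hω => ?_
  by_contra hθ
  have hclose : ‖θhat n ω - θ0‖ ≤ r / 2 := not_lt.mp hθ
  have hsub : closedBall 0 R ⊆ {u | θhat n ω + ((n : ℝ) ^ (-(1 : ℝ) / 2)) • u ∈ Θ} ∩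
      {u | ‖u‖ ≤ (n : ℝ) ^ ((3 : ℝ) / 8)} :=
    subset_inter
      (closedBall_zero_subset_setOf_add_smul_mem hball (by positivity) (by linarith))
      (fun u hu => (mem_closedBall_zero_iff.mp hu).trans hRn)
  have hdev := abs_setIntegral_sub_integral_le_of_subset hgint hgnonneg hsub
  simp only [mem_ofPred_eq] at hω hR
  linarith

/-- For every Lebesgue-integrable `g ≥ 0`, `∫_{Ûₙ ∩ Aₙ} g(u) du → ∫_{ℝ^q} g(u) du`
in probability. -/
theorem stmt17
    {Ω : Type*} [MeasurableSpace Ω] (P : Measure Ω) [IsProbabilityMeasure P]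
    (q : ℕ) (hq : 1 ≤ q)
    (Θ : Set (EuclideanSpace ℝ (Fin q))) (hΘopen : IsOpen Θ)
    (θ0 : EuclideanSpace ℝ (Fin q)) (hθ0 : θ0 ∈ Θ)
    (θhat : ℕ → Ω → EuclideanSpace ℝ (Fin q))
    (hθhatmeas : ∀ n, Measurable (θhat n))
    (h1 : ∀ ε > 0, Tendsto (fun n => P {ω | ε < ‖θhat n ω - θ0‖}) atTop (nhds 0))
    (g : EuclideanSpace ℝ (Fin q) → ℝ) (hgint : Integrable g) (hgnonneg : ∀ u, 0 ≤ g u) :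
    TendstoInProb P (fun n ω =>
      ∫ u in {u : EuclideanSpace ℝ (Fin q) |
            θhat n ω + ((n : ℝ) ^ (-(1 : ℝ) / 2)) • u ∈ Θ} ∩
          {u : EuclideanSpace ℝ (Fin q) | ‖u‖ ≤ (n : ℝ) ^ ((3 : ℝ) / 8)}, g u)
      (∫ u, g u) :=
  stmt17_general P q Θ hΘopen θ0 hθ0 θhat h1 g hgint hgnonneg

end
end
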